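/- arXiv:2604.23365 — 2 statements merged into one kernel-verified Lean document; each statement's English description precedes it below -/
import Mathlib

section
/- Let H1 be an r-uniform hypergraph (r ≥ 2) of order n1 and H2 a d-regular r-uniform hypergraph of order n2 ≥ r − 1, and let H = H1 ∘ H2 be their r-uniform corona. Write C = binom(n2−1, r−2). (a) If (β, w) is an eigenpair of the signless Laplacian Q(H1) and μ ∈ ℂ with μ ≠ 2d + C satisfies (μ − β − binom(n2, r−1))·(μ − 2d − C)^{r−1} − binom(n2, r−1)·C^{r−1} = 0, then μ is an eigenvalue of Q(H); an eigenvector assigns w_i to each vertex u_i of H1 and C·w_i/(μ − 2d − C) to every vertex of the i-th copy of H2. (b) If α is a non-main eigenvalue of Q(H2), then α + C is an eigenvalue of Q(H): for a non-main eigenvector z of Q(H2) for α and any i ∈ {1,…,n1}, the vector equal to z on the i-th copy of H2 and 0 elsewhere is an eigenvector of Q(H) for α + C. -/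
open Finset
open scoped Classical

/-- The adjacency hypermatrix entry of an `r`-uniform hypergraph with hyperedge set `E`:
the `(j, f 0, …, f (r-2))`-entry is `1/(r-1)!` when the indices are pairwise distinct and
form a hyperedge, and `0` otherwise. -/
noncomputable def adjEntry (r : ℕ) {V : Type*} [Fintype V] [DecidableEq V]
    (E : Finset (Finset V)) (j : V) (f : Fin (r - 1) → V) : ℂ :=
  if Function.Injective f ∧ (∀ i, f i ≠ j) ∧ insert j (Finset.image f Finset.univ) ∈ E then
    1 / ((r - 1).factorial : ℂ)
  else 0

/-- The degree of a vertex: the number of hyperedges containing it. -/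
def hdegree {V : Type*} [DecidableEq V] (E : Finset (Finset V)) (v : V) : ℕ :=
  (E.filter fun e => v ∈ e).card

/-- The Laplacian hypermatrix entry `L = D - A`. -/
noncomputable def lapEntry (r : ℕ) {V : Type*} [Fintype V] [DecidableEq V]
    (E : Finset (Finset V)) (j : V) (f : Fin (r - 1) → V) : ℂ :=
  (if ∀ i, f i = j then (hdegree E j : ℂ) else 0) - adjEntry r E j f

/-- The signless Laplacian hypermatrix entry `Q = D + A`. -/
noncomputable def signlessEntry (r : ℕ) {V : Type*} [Fintype V] [DecidableEq V]
    (E : Finset (Finset V)) (j : V) (f : Fin (r - 1) → V) : ℂ :=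
  (if ∀ i, f i = j then (hdegree E j : ℂ) else 0) + adjEntry r E j f

/-- `(lam, x)` is an eigenpair of the order-`r` hypermatrix `T` (represented by its
first index and the remaining `r-1` indices). -/
def IsEigenpair {V : Type*} [Fintype V] (r : ℕ)
    (T : V → (Fin (r - 1) → V) → ℂ) (lam : ℂ) (x : V → ℂ) : Prop :=
  x ≠ 0 ∧ ∀ j, ∑ f : Fin (r - 1) → V, T j f * ∏ i, x (f i) = lam * x j ^ (r - 1)

/-- A vector is non-main if the sum over all `(r-1)`-subsets `S` of the vertex set of
`∏_{i ∈ S} x i` vanishes. -/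
def IsNonMainVec {V : Type*} [Fintype V] [DecidableEq V] (r : ℕ) (x : V → ℂ) : Prop :=
  ∑ S ∈ Finset.univ.powersetCard (r - 1), ∏ i ∈ S, x i = 0

/-- An eigenvalue is non-main if it has some non-main eigenvector. -/
def IsNonMainEigenvalue {V : Type*} [Fintype V] [DecidableEq V] (r : ℕ)
    (T : V → (Fin (r - 1) → V) → ℂ) (lam : ℂ) : Prop :=
  ∃ x, IsEigenpair r T lam x ∧ IsNonMainVec r x

/-- The `r`-uniform corona `H₁ ∘ H₂`: `H₁` lives on `Fin n₁` (embedded via `Sum.inl`),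
the `i`-th copy of `H₂` lives on `{i} × Fin n₂` (embedded via `Sum.inr`), and for each
`i` every `r`-element subset of the `i`-th copy together with `u_i` that contains `u_i`
is added as a hyperedge. -/
noncomputable def coronaEdges (r n₁ n₂ : ℕ) (E₁ : Finset (Finset (Fin n₁)))
    (E₂ : Finset (Finset (Fin n₂))) : Finset (Finset (Fin n₁ ⊕ Fin n₁ × Fin n₂)) :=
  E₁.image (fun e => e.map ⟨Sum.inl, Sum.inl_injective⟩) ∪
  (Finset.univ ×ˢ E₂).image
    (fun p : Fin n₁ × Finset (Fin n₂) =>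
      p.2.image (fun v => Sum.inr (p.1, v))) ∪
  (Finset.univ ×ˢ (Finset.univ.powersetCard (r - 1) : Finset (Finset (Fin n₂)))).image
    (fun p : Fin n₁ × Finset (Fin n₂) =>
      insert (Sum.inl p.1) (p.2.image (fun v => Sum.inr (p.1, v))))

section aux
variable {V : Type*} [Fintype V] [DecidableEq V]

lemma inj_of_image_eq {m : ℕ} {f : Fin m → V} {s : Finset V} (hs : s.card = m)
    (hf : Finset.image f Finset.univ = s) : Function.Injective f := by
  have h : Set.InjOn f ↑(Finset.univ : Finset (Fin m)) := by
    apply Finset.injOn_of_card_image_eq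
    rw [hf, hs, Finset.card_univ, Fintype.card_fin]
  intro a b hab
  exact h (by simp) (by simp) hab

lemma card_image_fiber (m : ℕ) (s : Finset V) (hs : s.card = m) :
    (Finset.univ.filter fun f : Fin m → V => Finset.image f Finset.univ = s).card
      = m.factorial := by
  have e : {f : Fin m → V // Finset.image f Finset.univ = s} ≃ (Fin m ↪ s) :=
    { toFun := fun f => ⟨fun i => ⟨f.1 i, by
        have h := Finset.mem_image_of_mem f.1 (Finset.mem_univ i)
        rwa [f.2] at h⟩,
        fun a b hab => inj_of_image_eq hs f.2 (congrArg Subtype.val hab)⟩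
      invFun := fun g => ⟨fun i => (g i : V), by
        apply Finset.eq_of_subset_of_card_le
        · intro v hv
          simp only [Finset.mem_image] at hv
          obtain ⟨i, _, rfl⟩ := hv
          exact (g i).2
        · rw [hs, Finset.card_image_of_injective _
            (fun a b hab => g.injective (Subtype.ext hab)), Finset.card_univ,
            Fintype.card_fin]⟩
      left_inv := fun f => Subtype.ext (funext fun i => rfl)
      right_inv := fun g => by ext i; rfl }
  rw [← Fintype.card_subtype, Fintype.card_congr e, Fintype.card_embedding_eq,
    Fintype.card_fin, Fintype.card_coe, hs, Nat.descFactorial_self]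

lemma adj_sum (r : ℕ) {V : Type*} [Fintype V] [DecidableEq V] (E : Finset (Finset V))
    (hu : ∀ e ∈ E, e.card = r) (j : V) (x : V → ℂ) :
    ∑ f : Fin (r - 1) → V, adjEntry r E j f * ∏ i, x (f i)
      = ∑ e ∈ E.filter (fun e => j ∈ e), ∏ v ∈ e.erase j, x v := by
  rw [← Finset.sum_fiberwise Finset.univ (fun f : Fin (r-1) → V => Finset.image f Finset.univ)
      (fun f => adjEntry r E j f * ∏ i, x (f i))]
  have key : ∀ s : Finset V,
      (∑ f ∈ Finset.univ.filter (fun f : Fin (r-1) → V => Finset.image f Finset.univ = s),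
        adjEntry r E j f * ∏ i, x (f i))
      = if s.card = r - 1 ∧ j ∉ s ∧ insert j s ∈ E then ∏ v ∈ s, x v else 0 := by
    intro s
    by_cases hgood : s.card = r - 1 ∧ j ∉ s ∧ insert j s ∈ E
    · obtain ⟨hc, hjs, hE⟩ := hgood
      rw [if_pos ⟨hc, hjs, hE⟩]
      have hterm : ∀ f ∈ Finset.univ.filter
          (fun f : Fin (r-1) → V => Finset.image f Finset.univ = s),
          adjEntry r E j f * ∏ i, x (f i)
            = (1 / (((r-1).factorial : ℕ) : ℂ)) * ∏ v ∈ s, x v := by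
        intro f hf
        rw [Finset.mem_filter] at hf
        have hfi := hf.2
        have hinj : Function.Injective f := inj_of_image_eq hc hfi
        have h1 : adjEntry r E j f = 1 / (((r-1).factorial : ℕ) : ℂ) := by
          rw [adjEntry, if_pos]
          refine ⟨hinj, ?_, by rwa [hfi]⟩
          intro i hi
          exact hjs (hi ▸ (hfi ▸ Finset.mem_image_of_mem f (Finset.mem_univ i)))
        have h2 : (∏ i, x (f i)) = ∏ v ∈ s, x v := by
          rw [← hfi, Finset.prod_image]
          intro a _ b _ hab; exact hinj hab
        rw [h1, h2]
      rw [Finset.sum_congr rfl hterm, Finset.sum_const, nsmul_eq_mul,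
        card_image_fiber (r-1) s hc, ← mul_assoc, mul_one_div, div_self, one_mul]
      exact Nat.cast_ne_zero.2 (Nat.factorial_ne_zero (r-1))
    · rw [if_neg hgood]
      apply Finset.sum_eq_zero
      intro f hf
      rw [Finset.mem_filter] at hf
      have h0 : adjEntry r E j f = 0 := by
        rw [adjEntry, if_neg]
        rintro ⟨hinj, hne, hEm⟩
        apply hgood
        refine ⟨?_, ?_, ?_⟩
        · rw [← hf.2, Finset.card_image_of_injective _ hinj, Finset.card_univ,
            Fintype.card_fin]
        · rw [← hf.2]; simp only [Finset.mem_image]; rintro ⟨i, -, hi⟩; exact hne i hi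
        · rwa [hf.2] at hEm
      rw [h0, zero_mul]
  rw [Finset.sum_congr rfl (fun s _ => key s), ← Finset.sum_filter]
  refine Finset.sum_nbij' (fun s => insert j s) (fun e => e.erase j) ?_ ?_ ?_ ?_ ?_
  · intro s hs
    rw [Finset.mem_filter] at hs ⊢
    exact ⟨hs.2.2.2, Finset.mem_insert_self _ _⟩
  · intro e he
    rw [Finset.mem_filter] at he
    rw [Finset.mem_filter]
    refine ⟨Finset.mem_univ _, ?_, Finset.notMem_erase _ _, ?_⟩
    · rw [Finset.card_erase_of_mem he.2, hu e he.1]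
    · rw [Finset.insert_erase he.2]; exact he.1
  · intro s hs
    rw [Finset.mem_filter] at hs
    exact Finset.erase_insert hs.2.2.1
  · intro e he
    rw [Finset.mem_filter] at he
    exact Finset.insert_erase he.2
  · intro s hs
    rw [Finset.mem_filter] at hs
    rw [Finset.erase_insert hs.2.2.1]

lemma deg_sum (r : ℕ) (D : ℂ) (j : V) (x : V → ℂ) :
    ∑ f : Fin (r - 1) → V, (if ∀ i, f i = j then D else 0) * ∏ i, x (f i)
      = D * x j ^ (r - 1) := by
  rw [Finset.sum_eq_single (fun _ => j)]
  · rw [if_pos (fun _ => rfl)]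
    congr 1
    simp [Finset.prod_const]
  · intro f _ hne
    rw [if_neg, zero_mul]
    intro h; exact hne (funext h)
  · intro h; exact absurd (Finset.mem_univ _) h

lemma signless_sum (r : ℕ) {V : Type*} [Fintype V] [DecidableEq V] (E : Finset (Finset V))
    (hu : ∀ e ∈ E, e.card = r) (j : V) (x : V → ℂ) :
    ∑ f : Fin (r - 1) → V, signlessEntry r E j f * ∏ i, x (f i)
      = (hdegree E j : ℂ) * x j ^ (r - 1)
        + ∑ e ∈ E.filter (fun e => j ∈ e), ∏ v ∈ e.erase j, x v := by
  simp only [signlessEntry, add_mul]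
  rw [Finset.sum_add_distrib, deg_sum, adj_sum r E hu]

end aux

section corona
variable {r n₁ n₂ : ℕ}

lemma inr_pair_inj (i : Fin n₁) :
    Function.Injective (fun v : Fin n₂ => (Sum.inr (i, v) : Fin n₁ ⊕ Fin n₁ × Fin n₂)) := by
  intro a b h; simpa using h

lemma corona_card (hr : 2 ≤ r) (E₁ : Finset (Finset (Fin n₁))) (E₂ : Finset (Finset (Fin n₂)))
    (hu₁ : ∀ e ∈ E₁, e.card = r) (hu₂ : ∀ e ∈ E₂, e.card = r) :
    ∀ e ∈ coronaEdges r n₁ n₂ E₁ E₂, e.card = r := by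
  intro e he
  rw [coronaEdges, Finset.mem_union, Finset.mem_union] at he
  rcases he with (he | he) | he
  · obtain ⟨e₁, h1, rfl⟩ := Finset.mem_image.1 he
    rw [Finset.card_map]; exact hu₁ e₁ h1
  · obtain ⟨p, hp, rfl⟩ := Finset.mem_image.1 he
    rw [Finset.mem_product] at hp
    rw [Finset.card_image_of_injective _ (inr_pair_inj p.1)]
    exact hu₂ p.2 hp.2
  · obtain ⟨p, hp, rfl⟩ := Finset.mem_image.1 he
    rw [Finset.mem_product, Finset.mem_powersetCard] at hp
    rw [Finset.card_insert_of_notMem (by simp), Finset.card_image_of_injective _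
      (inr_pair_inj p.1), hp.2.2]
    omega

lemma corona_sum_inl (hr : 2 ≤ r) (E₁ : Finset (Finset (Fin n₁)))
    (E₂ : Finset (Finset (Fin n₂))) (hu₂ : ∀ e ∈ E₂, e.card = r) (a : Fin n₁)
    (g : Finset (Fin n₁ ⊕ Fin n₁ × Fin n₂) → ℂ) :
    ∑ e ∈ (coronaEdges r n₁ n₂ E₁ E₂).filter (fun e => Sum.inl a ∈ e), g e
      = (∑ e ∈ E₁.filter (fun e => a ∈ e), g (e.map ⟨Sum.inl, Sum.inl_injective⟩))
        + ∑ S ∈ (Finset.univ.powersetCard (r-1) : Finset (Finset (Fin n₂))),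
            g (insert (Sum.inl a) (S.image fun v => Sum.inr (a, v))) := by
  classical
  have hd1 : Disjoint
      ((E₁.image fun e => e.map ⟨Sum.inl, Sum.inl_injective⟩) ∪
        (Finset.univ ×ˢ E₂).image
          (fun p : Fin n₁ × Finset (Fin n₂) => p.2.image (fun v => Sum.inr (p.1, v))))
      ((Finset.univ ×ˢ (Finset.univ.powersetCard (r - 1) : Finset (Finset (Fin n₂)))).image
        (fun p : Fin n₁ × Finset (Fin n₂) =>
          insert (Sum.inl p.1) (p.2.image (fun v => Sum.inr (p.1, v))))) := by
    rw [Finset.disjoint_left]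
    intro e he heC
    obtain ⟨q, hq, hqe⟩ := Finset.mem_image.1 heC
    rw [Finset.mem_product, Finset.mem_powersetCard] at hq
    rw [Finset.mem_union] at he
    rcases he with he | he
    · obtain ⟨e₁, -, rfl⟩ := Finset.mem_image.1 he
      have hne : q.2.Nonempty := Finset.card_pos.1 (by omega)
      obtain ⟨u, hu⟩ := hne
      have hm : Sum.inr (q.1, u) ∈ insert (Sum.inl q.1)
          (q.2.image fun v => Sum.inr (q.1, v)) :=
        Finset.mem_insert_of_mem (Finset.mem_image_of_mem _ hu)
      rw [hqe] at hm
      simp [Finset.mem_map] at hm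
    · obtain ⟨p, -, rfl⟩ := Finset.mem_image.1 he
      have hm : Sum.inl q.1 ∈ insert (Sum.inl q.1)
          (q.2.image fun v => Sum.inr (q.1, v)) := Finset.mem_insert_self _ _
      rw [hqe] at hm
      simp [Finset.mem_image] at hm
  have hd2 : Disjoint (E₁.image fun e => e.map ⟨Sum.inl, Sum.inl_injective⟩)
      ((Finset.univ ×ˢ E₂).image
        (fun p : Fin n₁ × Finset (Fin n₂) => p.2.image (fun v => Sum.inr (p.1, v)))) := by
    rw [Finset.disjoint_left]
    intro e heA heB
    obtain ⟨e₁, -, rfl⟩ := Finset.mem_image.1 heA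
    obtain ⟨p, hp, hpe⟩ := Finset.mem_image.1 heB
    rw [Finset.mem_product] at hp
    have hcard := hu₂ p.2 hp.2
    have hne : p.2.Nonempty := Finset.card_pos.1 (by omega)
    obtain ⟨u, hu⟩ := hne
    have hm : (Sum.inr (p.1, u) : Fin n₁ ⊕ Fin n₁ × Fin n₂)
        ∈ p.2.image (fun v => (Sum.inr (p.1, v) : Fin n₁ ⊕ Fin n₁ × Fin n₂)) :=
      Finset.mem_image_of_mem _ hu
    rw [hpe] at hm
    simp [Finset.mem_map] at hm
  rw [coronaEdges, Finset.filter_union, Finset.filter_union,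
    Finset.sum_union ?h1, Finset.sum_union ?h2]
  case h1 => rw [← Finset.filter_union]; exact Finset.disjoint_filter_filter hd1
  case h2 => exact Finset.disjoint_filter_filter hd2
  have hB0 : ((Finset.univ ×ˢ E₂).image
      (fun p : Fin n₁ × Finset (Fin n₂) => p.2.image (fun v => Sum.inr (p.1, v)))).filter
        (fun e => Sum.inl a ∈ e) = ∅ := by
    rw [Finset.filter_eq_empty_iff]
    intro e he
    obtain ⟨p, -, rfl⟩ := Finset.mem_image.1 he
    simp [Finset.mem_image]
  rw [hB0, Finset.sum_empty, add_zero]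
  congr 1
  · rw [Finset.sum_filter, Finset.sum_image
      (fun p _ q _ h => Finset.map_injective _ h), Finset.sum_filter]
    apply Finset.sum_congr rfl
    intro e _
    have hc : (Sum.inl a ∈ e.map (⟨Sum.inl, Sum.inl_injective⟩ : Fin n₁ ↪ Fin n₁ ⊕ Fin n₁ × Fin n₂)) ↔ a ∈ e := by
      simp [Finset.mem_map]
    simp only [hc]
  · have hinjC : ∀ p ∈ (Finset.univ ×ˢ Finset.univ.powersetCard (r-1) :
        Finset (Fin n₁ × Finset (Fin n₂))),
        ∀ q ∈ (Finset.univ ×ˢ Finset.univ.powersetCard (r-1) :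
        Finset (Fin n₁ × Finset (Fin n₂))),
        (insert (Sum.inl p.1) (p.2.image (fun v => Sum.inr (p.1, v)))
            : Finset (Fin n₁ ⊕ Fin n₁ × Fin n₂))
          = insert (Sum.inl q.1) (q.2.image (fun v => Sum.inr (q.1, v))) → p = q := by
      intro p _ q _ h
      have h1 : p.1 = q.1 := by
        have hm : Sum.inl p.1 ∈ insert (Sum.inl q.1)
            (q.2.image fun v => Sum.inr (q.1, v)) := by
          rw [← h]; exact Finset.mem_insert_self _ _
        simp only [Finset.mem_insert, Finset.mem_image] at hm
        rcases hm with h1 | ⟨v, -, hv⟩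
        · exact Sum.inl_injective h1
        · exact absurd hv (by simp)
      have h2 : p.2 = q.2 := by
        rw [h1] at h
        have h3 := congrArg (fun s => Finset.erase s (Sum.inl q.1)) h
        rw [Finset.erase_insert (by simp), Finset.erase_insert (by simp)] at h3
        exact Finset.image_injective (inr_pair_inj q.1) h3
      exact Prod.ext h1 h2
    rw [Finset.sum_filter, Finset.sum_image hinjC, Finset.sum_product]
    have step1 : ∀ i' : Fin n₁,
        (∑ S ∈ (Finset.univ.powersetCard (r-1) : Finset (Finset (Fin n₂))),
          if Sum.inl a ∈ insert (Sum.inl i') (S.image fun v => Sum.inr (i', v)) then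
            g (insert (Sum.inl i') (S.image fun v => Sum.inr (i', v))) else 0)
        = if i' = a then
            ∑ S ∈ (Finset.univ.powersetCard (r-1) : Finset (Finset (Fin n₂))),
              g (insert (Sum.inl a) (S.image fun v => Sum.inr (a, v))) else 0 := by
      intro i'
      by_cases h : i' = a
      · subst h
        rw [if_pos rfl]
        apply Finset.sum_congr rfl
        intro S _
        rw [if_pos (Finset.mem_insert_self _ _)]
      · rw [if_neg h]
        apply Finset.sum_eq_zero
        intro S _
        rw [if_neg]
        intro hm
        simp only [Finset.mem_insert, Finset.mem_image] at hm
        rcases hm with h1 | ⟨v, -, hv⟩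
        · exact h (Sum.inl_injective h1).symm
        · exact absurd hv (by simp)
    rw [Finset.sum_congr rfl (fun i' _ => step1 i'), Finset.sum_ite_eq' Finset.univ a,
      if_pos (Finset.mem_univ a)]
end corona


section corona2
variable {r n₁ n₂ : ℕ}

lemma card_powFilter (k : ℕ) (v : Fin n₂) :
    (((Finset.univ.powersetCard (k+1) : Finset (Finset (Fin n₂)))).filter
      (fun S => v ∈ S)).card = (n₂ - 1).choose k := by
  have h : (((Finset.univ.powersetCard (k+1) : Finset (Finset (Fin n₂)))).filter
      (fun S => v ∈ S)).card
      = (((Finset.univ.erase v).powersetCard k : Finset (Finset (Fin n₂)))).card := by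
    refine Finset.card_bij' (fun S _ => S.erase v) (fun T _ => insert v T)
      ?hi ?hj ?left ?right
    case hi =>
      intro S hS
      rw [Finset.mem_filter, Finset.mem_powersetCard] at hS
      rw [Finset.mem_powersetCard]
      refine ⟨Finset.erase_subset_erase _ hS.1.1, ?_⟩
      rw [Finset.card_erase_of_mem hS.2, hS.1.2]
      omega
    case hj =>
      intro T hT
      rw [Finset.mem_powersetCard] at hT
      have hvT : v ∉ T := fun hv => (Finset.mem_erase.1 (hT.1 hv)).1 rfl
      rw [Finset.mem_filter, Finset.mem_powersetCard]
      refine ⟨⟨Finset.subset_univ _, ?_⟩, Finset.mem_insert_self _ _⟩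
      rw [Finset.card_insert_of_notMem hvT, hT.2]
    case left =>
      intro S hS
      rw [Finset.mem_filter] at hS
      exact Finset.insert_erase hS.2
    case right =>
      intro T hT
      rw [Finset.mem_powersetCard] at hT
      exact Finset.erase_insert (fun hv => (Finset.mem_erase.1 (hT.1 hv)).1 rfl)
  rw [h, Finset.card_powersetCard, Finset.card_erase_of_mem (Finset.mem_univ v),
    Finset.card_univ, Fintype.card_fin]

lemma corona_sum_inr (hr : 2 ≤ r) (E₁ : Finset (Finset (Fin n₁)))
    (E₂ : Finset (Finset (Fin n₂))) (hu₂ : ∀ e ∈ E₂, e.card = r) (i : Fin n₁) (v : Fin n₂)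
    (g : Finset (Fin n₁ ⊕ Fin n₁ × Fin n₂) → ℂ) :
    ∑ e ∈ (coronaEdges r n₁ n₂ E₁ E₂).filter (fun e => Sum.inr (i, v) ∈ e), g e
      = (∑ e ∈ E₂.filter (fun e => v ∈ e), g (e.image fun u => Sum.inr (i, u)))
        + ∑ S ∈ ((Finset.univ.powersetCard (r-1) : Finset (Finset (Fin n₂)))).filter
            (fun S => v ∈ S),
            g (insert (Sum.inl i) (S.image fun u => Sum.inr (i, u))) := by
  classical
  have hd1 : Disjoint
      ((E₁.image fun e => e.map ⟨Sum.inl, Sum.inl_injective⟩) ∪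
        (Finset.univ ×ˢ E₂).image
          (fun p : Fin n₁ × Finset (Fin n₂) => p.2.image (fun v => Sum.inr (p.1, v))))
      ((Finset.univ ×ˢ (Finset.univ.powersetCard (r - 1) : Finset (Finset (Fin n₂)))).image
        (fun p : Fin n₁ × Finset (Fin n₂) =>
          insert (Sum.inl p.1) (p.2.image (fun v => Sum.inr (p.1, v))))) := by
    rw [Finset.disjoint_left]
    intro e he heC
    obtain ⟨q, hq, hqe⟩ := Finset.mem_image.1 heC
    rw [Finset.mem_product, Finset.mem_powersetCard] at hq
    rw [Finset.mem_union] at he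
    rcases he with he | he
    · obtain ⟨e₁, -, rfl⟩ := Finset.mem_image.1 he
      have hne : q.2.Nonempty := Finset.card_pos.1 (by omega)
      obtain ⟨u, hu⟩ := hne
      have hm : Sum.inr (q.1, u) ∈ insert (Sum.inl q.1)
          (q.2.image fun v => Sum.inr (q.1, v)) :=
        Finset.mem_insert_of_mem (Finset.mem_image_of_mem _ hu)
      rw [hqe] at hm
      simp [Finset.mem_map] at hm
    · obtain ⟨p, -, rfl⟩ := Finset.mem_image.1 he
      have hm : Sum.inl q.1 ∈ insert (Sum.inl q.1)
          (q.2.image fun v => Sum.inr (q.1, v)) := Finset.mem_insert_self _ _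
      rw [hqe] at hm
      simp [Finset.mem_image] at hm
  have hd2 : Disjoint (E₁.image fun e => e.map ⟨Sum.inl, Sum.inl_injective⟩)
      ((Finset.univ ×ˢ E₂).image
        (fun p : Fin n₁ × Finset (Fin n₂) => p.2.image (fun v => Sum.inr (p.1, v)))) := by
    rw [Finset.disjoint_left]
    intro e heA heB
    obtain ⟨e₁, -, rfl⟩ := Finset.mem_image.1 heA
    obtain ⟨p, hp, hpe⟩ := Finset.mem_image.1 heB
    rw [Finset.mem_product] at hp
    have hcard := hu₂ p.2 hp.2
    have hne : p.2.Nonempty := Finset.card_pos.1 (by omega)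
    obtain ⟨u, hu⟩ := hne
    have hm : (Sum.inr (p.1, u) : Fin n₁ ⊕ Fin n₁ × Fin n₂)
        ∈ p.2.image (fun v => (Sum.inr (p.1, v) : Fin n₁ ⊕ Fin n₁ × Fin n₂)) :=
      Finset.mem_image_of_mem _ hu
    rw [hpe] at hm
    simp [Finset.mem_map] at hm
  rw [coronaEdges, Finset.filter_union, Finset.filter_union,
    Finset.sum_union ?h1, Finset.sum_union ?h2]
  case h1 => rw [← Finset.filter_union]; exact Finset.disjoint_filter_filter hd1
  case h2 => exact Finset.disjoint_filter_filter hd2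
  have hA0 : ((E₁.image fun e => e.map ⟨Sum.inl, Sum.inl_injective⟩)).filter
      (fun e => Sum.inr (i, v) ∈ e) = ∅ := by
    rw [Finset.filter_eq_empty_iff]
    intro e he
    obtain ⟨e₁, -, rfl⟩ := Finset.mem_image.1 he
    simp [Finset.mem_map]
  rw [hA0, Finset.sum_empty, zero_add]
  congr 1
  · -- B part
    have hinjB : ∀ p ∈ (Finset.univ ×ˢ E₂ : Finset (Fin n₁ × Finset (Fin n₂))),
        ∀ q ∈ (Finset.univ ×ˢ E₂ : Finset (Fin n₁ × Finset (Fin n₂))),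
        (p.2.image (fun v => Sum.inr (p.1, v)) : Finset (Fin n₁ ⊕ Fin n₁ × Fin n₂))
          = q.2.image (fun v => Sum.inr (q.1, v)) → p = q := by
      intro p hp q hq h
      rw [Finset.mem_product] at hp hq
      have hcard := hu₂ p.2 hp.2
      have hne : p.2.Nonempty := Finset.card_pos.1 (by omega)
      obtain ⟨u, hu⟩ := hne
      have hm : (Sum.inr (p.1, u) : Fin n₁ ⊕ Fin n₁ × Fin n₂)
          ∈ q.2.image (fun v => (Sum.inr (q.1, v) : Fin n₁ ⊕ Fin n₁ × Fin n₂)) := by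
        rw [← h]; exact Finset.mem_image_of_mem _ hu
      simp only [Finset.mem_image] at hm
      obtain ⟨u', -, hu'⟩ := hm
      have h9 : (q.1, u') = (p.1, u) := Sum.inr_injective hu'
      have h1 : q.1 = p.1 := (Prod.ext_iff.1 h9).1
      rw [← h1] at h
      have h2 : p.2 = q.2 := Finset.image_injective (inr_pair_inj q.1) h
      exact Prod.ext h1.symm h2
    rw [Finset.sum_filter, Finset.sum_image hinjB, Finset.sum_product]
    have step1 : ∀ i' : Fin n₁,
        (∑ e ∈ E₂,
          if (Sum.inr (i, v) : Fin n₁ ⊕ Fin n₁ × Fin n₂)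
              ∈ e.image (fun u => Sum.inr (i', u)) then
            g (e.image fun u => Sum.inr (i', u)) else 0)
        = if i' = i then
            ∑ e ∈ E₂, (if v ∈ e then g (e.image fun u => Sum.inr (i, u)) else 0) else 0 := by
      intro i'
      by_cases h : i' = i
      · subst h
        rw [if_pos rfl]
        apply Finset.sum_congr rfl
        intro e _
        have hc : ((Sum.inr (i', v) : Fin n₁ ⊕ Fin n₁ × Fin n₂)
            ∈ e.image (fun u => Sum.inr (i', u))) ↔ v ∈ e := by
          simp [Finset.mem_image]
        simp only [hc]
      · rw [if_neg h]
        apply Finset.sum_eq_zero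
        intro e _
        rw [if_neg]
        intro hm
        simp only [Finset.mem_image] at hm
        obtain ⟨u, -, hu⟩ := hm
        have h9 : (i', u) = (i, v) := Sum.inr_injective hu
        exact h (Prod.ext_iff.1 h9).1
    rw [Finset.sum_congr rfl (fun i' _ => step1 i'), Finset.sum_ite_eq' Finset.univ i,
      if_pos (Finset.mem_univ i), ← Finset.sum_filter]
  · -- C part
    have hinjC : ∀ p ∈ (Finset.univ ×ˢ Finset.univ.powersetCard (r-1) :
        Finset (Fin n₁ × Finset (Fin n₂))),
        ∀ q ∈ (Finset.univ ×ˢ Finset.univ.powersetCard (r-1) :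
        Finset (Fin n₁ × Finset (Fin n₂))),
        (insert (Sum.inl p.1) (p.2.image (fun v => Sum.inr (p.1, v)))
            : Finset (Fin n₁ ⊕ Fin n₁ × Fin n₂))
          = insert (Sum.inl q.1) (q.2.image (fun v => Sum.inr (q.1, v))) → p = q := by
      intro p _ q _ h
      have h1 : p.1 = q.1 := by
        have hm : Sum.inl p.1 ∈ insert (Sum.inl q.1)
            (q.2.image fun v => Sum.inr (q.1, v)) := by
          rw [← h]; exact Finset.mem_insert_self _ _
        simp only [Finset.mem_insert, Finset.mem_image] at hm
        rcases hm with h1 | ⟨u, -, hu⟩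
        · exact Sum.inl_injective h1
        · exact absurd hu (by simp)
      have h2 : p.2 = q.2 := by
        rw [h1] at h
        have h3 := congrArg (fun s => Finset.erase s (Sum.inl q.1)) h
        rw [Finset.erase_insert (by simp), Finset.erase_insert (by simp)] at h3
        exact Finset.image_injective (inr_pair_inj q.1) h3
      exact Prod.ext h1 h2
    rw [Finset.sum_filter, Finset.sum_image hinjC, Finset.sum_product]
    have step1 : ∀ i' : Fin n₁,
        (∑ S ∈ (Finset.univ.powersetCard (r-1) : Finset (Finset (Fin n₂))),
          if (Sum.inr (i, v) : Fin n₁ ⊕ Fin n₁ × Fin n₂)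
              ∈ insert (Sum.inl i') (S.image fun u => Sum.inr (i', u)) then
            g (insert (Sum.inl i') (S.image fun u => Sum.inr (i', u))) else 0)
        = if i' = i then
            ∑ S ∈ (Finset.univ.powersetCard (r-1) : Finset (Finset (Fin n₂))),
              (if v ∈ S then g (insert (Sum.inl i) (S.image fun u => Sum.inr (i, u)))
                else 0) else 0 := by
      intro i'
      by_cases h : i' = i
      · subst h
        rw [if_pos rfl]
        apply Finset.sum_congr rfl
        intro S _
        have hc : ((Sum.inr (i', v) : Fin n₁ ⊕ Fin n₁ × Fin n₂)
            ∈ insert (Sum.inl i') (S.image fun u => Sum.inr (i', u))) ↔ v ∈ S := by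
          simp [Finset.mem_insert, Finset.mem_image]
        simp only [hc]
      · rw [if_neg h]
        apply Finset.sum_eq_zero
        intro S _
        rw [if_neg]
        intro hm
        simp only [Finset.mem_insert, Finset.mem_image] at hm
        rcases hm with h1 | ⟨u, -, hu⟩
        · exact absurd h1 (by simp)
        · have h9 : (i', u) = (i, v) := Sum.inr_injective hu
          exact h (Prod.ext_iff.1 h9).1
    rw [Finset.sum_congr rfl (fun i' _ => step1 i'), Finset.sum_ite_eq' Finset.univ i,
      if_pos (Finset.mem_univ i), ← Finset.sum_filter]

end corona2

/-- signless Laplacian eigenvalues of the corona `H₁ ∘ H₂` with `H₂`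
`d`-regular, with `C = binom(n₂-1, r-2)`. -/
theorem stmt18 (r n₁ n₂ : ℕ) (hr : 2 ≤ r) (hn₂ : r - 1 ≤ n₂)
    (E₁ : Finset (Finset (Fin n₁))) (E₂ : Finset (Finset (Fin n₂)))
    (hu₁ : ∀ e ∈ E₁, e.card = r) (hu₂ : ∀ e ∈ E₂, e.card = r)
    (d : ℕ) (hreg : ∀ v, hdegree E₂ v = d) :
    (∀ (beta mu : ℂ) (w : Fin n₁ → ℂ),
        IsEigenpair r (signlessEntry r E₁) beta w →
        mu ≠ 2 * (d : ℂ) + ((n₂ - 1).choose (r - 2) : ℂ) →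
        (mu - beta - (n₂.choose (r - 1) : ℂ)) *
            (mu - 2 * (d : ℂ) - ((n₂ - 1).choose (r - 2) : ℂ)) ^ (r - 1) -
          (n₂.choose (r - 1) : ℂ) * ((n₂ - 1).choose (r - 2) : ℂ) ^ (r - 1) = 0 →
        IsEigenpair r (signlessEntry r (coronaEdges r n₁ n₂ E₁ E₂)) mu
          (Sum.elim w fun p =>
            ((n₂ - 1).choose (r - 2) : ℂ) * w p.1 /
              (mu - 2 * (d : ℂ) - ((n₂ - 1).choose (r - 2) : ℂ)))) ∧
    (∀ (alpha : ℂ) (z : Fin n₂ → ℂ),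
        IsEigenpair r (signlessEntry r E₂) alpha z → IsNonMainVec r z →
        ∀ i : Fin n₁,
          IsEigenpair r (signlessEntry r (coronaEdges r n₁ n₂ E₁ E₂))
            (alpha + ((n₂ - 1).choose (r - 2) : ℂ))
            (Sum.elim (fun _ : Fin n₁ => (0 : ℂ))
              (fun p => if p.1 = i then z p.2 else 0))) := by
  obtain ⟨k, rfl⟩ : ∃ k, r = k + 2 := ⟨r - 2, by omega⟩
  have e1 : k + 2 - 1 = k + 1 := by omega
  have e2 : k + 2 - 2 = k := by omega
  have hcor := corona_card (by omega) E₁ E₂ hu₁ hu₂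
  have hdegA : ∀ a : Fin n₁,
      ((hdegree (coronaEdges (k+2) n₁ n₂ E₁ E₂) (Sum.inl a) : ℕ) : ℂ)
        = ((hdegree E₁ a : ℕ) : ℂ) + (n₂.choose (k+1) : ℂ) := by
    intro a
    have h := corona_sum_inl (r := k+2) hr E₁ E₂ hu₂ a (fun _ => (1:ℂ))
    rw [← Finset.cast_card, ← Finset.cast_card, ← Finset.cast_card,
      Finset.card_powersetCard, Finset.card_univ, Fintype.card_fin, e1] at h
    exact h
  have hdegB : ∀ (i : Fin n₁) (v : Fin n₂),
      ((hdegree (coronaEdges (k+2) n₁ n₂ E₁ E₂) (Sum.inr (i, v)) : ℕ) : ℂ)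
        = (d : ℂ) + ((n₂-1).choose k : ℂ) := by
    intro i v
    have h := corona_sum_inr (r := k+2) hr E₁ E₂ hu₂ i v (fun _ => (1:ℂ))
    rw [← Finset.cast_card, ← Finset.cast_card, ← Finset.cast_card, e1,
      card_powFilter] at h
    rw [show (E₂.filter (fun e => v ∈ e)).card = d from hreg v] at h
    exact h
  constructor
  · -- part (a)
    intro beta mu w hw hmu hpoly
    simp only [e1, e2] at hpoly hmu ⊢
    obtain ⟨hwne, hweq⟩ := hw
    have ht : (mu - 2*(d:ℂ) - ((n₂-1).choose k : ℂ)) ≠ 0 := by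
      intro h; exact hmu (by linear_combination h)
    have hE₁ : ∀ a : Fin n₁,
        ∑ e ∈ E₁.filter (fun e => a ∈ e), ∏ u ∈ e.erase a, w u
          = beta * w a ^ (k+1) - ((hdegree E₁ a : ℕ) : ℂ) * w a ^ (k+1) := by
      intro a
      have h := hweq a
      rw [signless_sum (k+2) E₁ hu₁ a w, e1] at h
      linear_combination h
    constructor
    · have hex : ∃ i, w i ≠ 0 := by
        by_contra hc; push_neg at hc; exact hwne (funext hc)
      obtain ⟨i0, hi0⟩ := hex
      intro h0
      apply hi0
      have := congrFun h0 (Sum.inl i0)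
      simpa using this
    · intro j
      rw [signless_sum (k+2) _ hcor j]
      cases j with
      | inl a =>
        rw [corona_sum_inl hr E₁ E₂ hu₂ a]
        have hAsum : ∑ e ∈ E₁.filter (fun e => a ∈ e),
            (∏ v ∈ (e.map (⟨Sum.inl, Sum.inl_injective⟩ :
                Fin n₁ ↪ Fin n₁ ⊕ Fin n₁ × Fin n₂)).erase (Sum.inl a),
              (Sum.elim w fun p => ((n₂-1).choose k : ℂ) * w p.1 /
                (mu - 2*(d:ℂ) - ((n₂-1).choose k : ℂ))) v)
            = beta * w a ^ (k+1) - ((hdegree E₁ a : ℕ) : ℂ) * w a ^ (k+1) := by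
          rw [← hE₁ a]
          apply Finset.sum_congr rfl
          intro e _
          have hme : (Finset.map (⟨Sum.inl, Sum.inl_injective⟩ :
              Fin n₁ ↪ Fin n₁ ⊕ Fin n₁ × Fin n₂) e).erase (Sum.inl a)
              = Finset.map (⟨Sum.inl, Sum.inl_injective⟩ :
              Fin n₁ ↪ Fin n₁ ⊕ Fin n₁ × Fin n₂) (e.erase a) :=
            (Finset.map_erase _ e a).symm
          rw [hme, Finset.prod_map]
          apply Finset.prod_congr rfl
          intro u _
          rfl
        have hCsum : ∑ S ∈ (Finset.univ.powersetCard (k+1) : Finset (Finset (Fin n₂))),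
            (∏ v ∈ (insert (Sum.inl a) (S.image fun u => Sum.inr (a, u))).erase
                (Sum.inl a),
              (Sum.elim w fun p => ((n₂-1).choose k : ℂ) * w p.1 /
                (mu - 2*(d:ℂ) - ((n₂-1).choose k : ℂ))) v)
            = (n₂.choose (k+1) : ℂ) * (((n₂-1).choose k : ℂ) * w a /
                (mu - 2*(d:ℂ) - ((n₂-1).choose k : ℂ))) ^ (k+1) := by
          have h1 : ∀ S ∈ (Finset.univ.powersetCard (k+1) : Finset (Finset (Fin n₂))),
              (∏ v ∈ (insert (Sum.inl a) (S.image fun u => Sum.inr (a, u))).erase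
                  (Sum.inl a),
                (Sum.elim w fun p => ((n₂-1).choose k : ℂ) * w p.1 /
                  (mu - 2*(d:ℂ) - ((n₂-1).choose k : ℂ))) v)
              = (((n₂-1).choose k : ℂ) * w a /
                  (mu - 2*(d:ℂ) - ((n₂-1).choose k : ℂ))) ^ (k+1) := by
            intro S hS
            rw [Finset.erase_insert (by simp),
              Finset.prod_image (fun u _ u' _ h => inr_pair_inj a h)]
            rw [Finset.mem_powersetCard] at hS
            simp only [Sum.elim_inr]
            rw [Finset.prod_const, hS.2]
          rw [Finset.sum_congr rfl h1, Finset.sum_const, Finset.card_powersetCard,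
            Finset.card_univ, Fintype.card_fin, nsmul_eq_mul]
        rw [e1, hAsum, hCsum, hdegA a]
        simp only [Sum.elim_inl]
        have hu : (mu - 2*(d:ℂ) - ((n₂-1).choose k : ℂ)) ^ (k+1) * (mu - 2*(d:ℂ) - ((n₂-1).choose k : ℂ))⁻¹ ^ (k+1) = 1 := by
          rw [← mul_pow, mul_inv_cancel₀ ht, one_pow]
        linear_combination (-(w a ^ (k+1)) * (mu - 2*(d:ℂ) - ((n₂-1).choose k : ℂ))⁻¹ ^ (k+1)) * hpoly
          + (mu - beta - (n₂.choose (k+1) : ℂ)) * w a ^ (k+1) * hu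
      | inr q =>
        obtain ⟨i, v⟩ := q
        rw [corona_sum_inr hr E₁ E₂ hu₂ i v]
        have hBsum : ∑ e ∈ E₂.filter (fun e => v ∈ e),
            (∏ v' ∈ (e.image fun u => (Sum.inr (i, u) : Fin n₁ ⊕ Fin n₁ × Fin n₂)).erase
                (Sum.inr (i, v)),
              (Sum.elim w fun p => ((n₂-1).choose k : ℂ) * w p.1 /
                (mu - 2*(d:ℂ) - ((n₂-1).choose k : ℂ))) v')
            = (d : ℂ) * (((n₂-1).choose k : ℂ) * w i /
                (mu - 2*(d:ℂ) - ((n₂-1).choose k : ℂ))) ^ (k+1) := by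
          have h1 : ∀ e ∈ E₂.filter (fun e => v ∈ e),
              (∏ v' ∈ (e.image fun u => (Sum.inr (i, u) : Fin n₁ ⊕ Fin n₁ × Fin n₂)).erase
                  (Sum.inr (i, v)),
                (Sum.elim w fun p => ((n₂-1).choose k : ℂ) * w p.1 /
                  (mu - 2*(d:ℂ) - ((n₂-1).choose k : ℂ))) v')
              = (((n₂-1).choose k : ℂ) * w i /
                  (mu - 2*(d:ℂ) - ((n₂-1).choose k : ℂ))) ^ (k+1) := by
            intro e he
            rw [Finset.mem_filter] at he
            rw [← Finset.image_erase (inr_pair_inj i),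
              Finset.prod_image (fun u _ u' _ h => inr_pair_inj i h)]
            simp only [Sum.elim_inr]
            rw [Finset.prod_const, Finset.card_erase_of_mem he.2, hu₂ e he.1, e1]
          rw [Finset.sum_congr rfl h1, Finset.sum_const, nsmul_eq_mul]
          have : (E₂.filter (fun e => v ∈ e)).card = d := hreg v
          rw [this]
        have hCsum : ∑ S ∈ ((Finset.univ.powersetCard (k+1) :
              Finset (Finset (Fin n₂)))).filter (fun S => v ∈ S),
            (∏ v' ∈ (insert (Sum.inl i) (S.image fun u => Sum.inr (i, u))).erase
                (Sum.inr (i, v)),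
              (Sum.elim w fun p => ((n₂-1).choose k : ℂ) * w p.1 /
                (mu - 2*(d:ℂ) - ((n₂-1).choose k : ℂ))) v')
            = ((n₂-1).choose k : ℂ) * (w i * (((n₂-1).choose k : ℂ) * w i /
                (mu - 2*(d:ℂ) - ((n₂-1).choose k : ℂ))) ^ k) := by
          have h1 : ∀ S ∈ ((Finset.univ.powersetCard (k+1) :
                Finset (Finset (Fin n₂)))).filter (fun S => v ∈ S),
              (∏ v' ∈ (insert (Sum.inl i) (S.image fun u => Sum.inr (i, u))).erase
                  (Sum.inr (i, v)),
                (Sum.elim w fun p => ((n₂-1).choose k : ℂ) * w p.1 /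
                  (mu - 2*(d:ℂ) - ((n₂-1).choose k : ℂ))) v')
              = w i * (((n₂-1).choose k : ℂ) * w i /
                  (mu - 2*(d:ℂ) - ((n₂-1).choose k : ℂ))) ^ k := by
            intro S hS
            rw [Finset.mem_filter, Finset.mem_powersetCard] at hS
            rw [Finset.erase_insert_of_ne (by simp),
              ← Finset.image_erase (inr_pair_inj i),
              Finset.prod_insert (by simp)]
            rw [Finset.prod_image (fun u _ u' _ h => inr_pair_inj i h)]
            simp only [Sum.elim_inl, Sum.elim_inr]
            rw [Finset.prod_const, Finset.card_erase_of_mem hS.2, hS.1.2, Nat.add_sub_cancel]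
          rw [Finset.sum_congr rfl h1, Finset.sum_const, card_powFilter, nsmul_eq_mul]
        rw [e1, hBsum, hCsum, hdegB i v]
        simp only [Sum.elim_inr]
        have hu : (mu - 2*(d:ℂ) - ((n₂-1).choose k : ℂ)) * (mu - 2*(d:ℂ) - ((n₂-1).choose k : ℂ))⁻¹ = 1 := mul_inv_cancel₀ ht
        linear_combination (-((((n₂-1).choose k : ℂ) * w i * (mu - 2*(d:ℂ) - ((n₂-1).choose k : ℂ))⁻¹) ^ k
          * ((n₂-1).choose k : ℂ) * w i)) * hu
  · -- part (b)
    intro alpha z hz hnm i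
    obtain ⟨hzne, hzeq⟩ := hz
    have hE₂ : ∀ v : Fin n₂,
        ∑ e ∈ E₂.filter (fun e => v ∈ e), ∏ u ∈ e.erase v, z u
          = alpha * z v ^ (k+1) - (d : ℂ) * z v ^ (k+1) := by
      intro v
      have h := hzeq v
      rw [signless_sum (k+2) E₂ hu₂ v z, e1, hreg v] at h
      linear_combination h
    simp only [e2]
    constructor
    · have hex : ∃ v, z v ≠ 0 := by
        by_contra hc; push_neg at hc; exact hzne (funext hc)
      obtain ⟨v0, hv0⟩ := hex
      intro h0
      apply hv0
      have := congrFun h0 (Sum.inr (i, v0))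
      simpa using this
    · intro j
      rw [signless_sum (k+2) _ hcor j]
      cases j with
      | inl a =>
        rw [corona_sum_inl hr E₁ E₂ hu₂ a]
        have hA0 : ∑ e ∈ E₁.filter (fun e => a ∈ e),
            (∏ v ∈ (e.map (⟨Sum.inl, Sum.inl_injective⟩ :
                Fin n₁ ↪ Fin n₁ ⊕ Fin n₁ × Fin n₂)).erase (Sum.inl a),
              (Sum.elim (fun _ : Fin n₁ => (0:ℂ))
                (fun p => if p.1 = i then z p.2 else 0)) v) = 0 := by
          apply Finset.sum_eq_zero
          intro e he
          rw [Finset.mem_filter] at he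
          have hme : (Finset.map (⟨Sum.inl, Sum.inl_injective⟩ :
              Fin n₁ ↪ Fin n₁ ⊕ Fin n₁ × Fin n₂) e).erase (Sum.inl a)
              = Finset.map (⟨Sum.inl, Sum.inl_injective⟩ :
              Fin n₁ ↪ Fin n₁ ⊕ Fin n₁ × Fin n₂) (e.erase a) :=
            (Finset.map_erase _ e a).symm
          rw [hme, Finset.prod_map]
          have hne : (e.erase a).Nonempty := by
            rw [← Finset.card_pos, Finset.card_erase_of_mem he.2, hu₁ e he.1]
            omega
          obtain ⟨u, hu⟩ := hne
          exact Finset.prod_eq_zero hu rfl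
        have hC0 : ∑ S ∈ (Finset.univ.powersetCard (k+1) : Finset (Finset (Fin n₂))),
            (∏ v ∈ (insert (Sum.inl a) (S.image fun u => Sum.inr (a, u))).erase
                (Sum.inl a),
              (Sum.elim (fun _ : Fin n₁ => (0:ℂ))
                (fun p => if p.1 = i then z p.2 else 0)) v) = 0 := by
          by_cases hai : a = i
          · subst hai
            have h1 : ∀ S ∈ (Finset.univ.powersetCard (k+1) : Finset (Finset (Fin n₂))),
                (∏ v ∈ (insert (Sum.inl a) (S.image fun u => Sum.inr (a, u))).erase
                    (Sum.inl a),
                  (Sum.elim (fun _ : Fin n₁ => (0:ℂ))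
                    (fun p => if p.1 = a then z p.2 else 0)) v)
                = ∏ u ∈ S, z u := by
              intro S _
              rw [Finset.erase_insert (by simp),
                Finset.prod_image (fun u _ u' _ h => inr_pair_inj a h)]
              apply Finset.prod_congr rfl
              intro u _
              simp
            rw [Finset.sum_congr rfl h1]
            have hnm' := hnm
            rw [IsNonMainVec, e1] at hnm'
            exact hnm'
          · apply Finset.sum_eq_zero
            intro S hS
            rw [Finset.mem_powersetCard] at hS
            rw [Finset.erase_insert (by simp),
              Finset.prod_image (fun u _ u' _ h => inr_pair_inj a h)]
            have hne : S.Nonempty := by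
              rw [← Finset.card_pos, hS.2]; omega
            obtain ⟨u, hu⟩ := hne
            apply Finset.prod_eq_zero hu
            simp [hai]
        rw [e1, hA0, hC0]
        simp [zero_pow]
      | inr q =>
        obtain ⟨i', v⟩ := q
        rw [corona_sum_inr hr E₁ E₂ hu₂ i' v]
        have hC0 : ∑ S ∈ ((Finset.univ.powersetCard (k+1) :
              Finset (Finset (Fin n₂)))).filter (fun S => v ∈ S),
            (∏ v' ∈ (insert (Sum.inl i') (S.image fun u => Sum.inr (i', u))).erase
                (Sum.inr (i', v)),
              (Sum.elim (fun _ : Fin n₁ => (0:ℂ))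
                (fun p => if p.1 = i then z p.2 else 0)) v') = 0 := by
          apply Finset.sum_eq_zero
          intro S _
          apply Finset.prod_eq_zero (i := Sum.inl i')
          · exact Finset.mem_erase.2 ⟨by simp, Finset.mem_insert_self _ _⟩
          · rfl
        by_cases hii : i' = i
        · subst hii
          have hB : ∑ e ∈ E₂.filter (fun e => v ∈ e),
              (∏ v' ∈ (e.image fun u =>
                  (Sum.inr (i', u) : Fin n₁ ⊕ Fin n₁ × Fin n₂)).erase (Sum.inr (i', v)),
                (Sum.elim (fun _ : Fin n₁ => (0:ℂ))
                  (fun p => if p.1 = i' then z p.2 else 0)) v')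
              = alpha * z v ^ (k+1) - (d : ℂ) * z v ^ (k+1) := by
            rw [← hE₂ v]
            apply Finset.sum_congr rfl
            intro e _
            rw [← Finset.image_erase (inr_pair_inj i'),
              Finset.prod_image (fun u _ u' _ h => inr_pair_inj i' h)]
            apply Finset.prod_congr rfl
            intro u _
            simp
          rw [e1, hB, hC0, hdegB i' v]
          simp only [Sum.elim_inr, if_pos rfl, eq_self_iff_true, if_true]
          ring
        · have hB0 : ∑ e ∈ E₂.filter (fun e => v ∈ e),
              (∏ v' ∈ (e.image fun u =>
                  (Sum.inr (i', u) : Fin n₁ ⊕ Fin n₁ × Fin n₂)).erase (Sum.inr (i', v)),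
                (Sum.elim (fun _ : Fin n₁ => (0:ℂ))
                  (fun p => if p.1 = i then z p.2 else 0)) v') = 0 := by
            apply Finset.sum_eq_zero
            intro e he
            rw [Finset.mem_filter] at he
            rw [← Finset.image_erase (inr_pair_inj i'),
              Finset.prod_image (fun u _ u' _ h => inr_pair_inj i' h)]
            have hne : (e.erase v).Nonempty := by
              rw [← Finset.card_pos, Finset.card_erase_of_mem he.2, hu₂ e he.1]
              omega
            obtain ⟨u, hu⟩ := hne
            apply Finset.prod_eq_zero hu
            simp [hii]
          rw [e1, hB0, hC0]
          simp [hii, zero_pow]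
end

section
/- Let G be a tree with at least 2 edges and let r ≥ 3. Then the r-th power hypertree G^r does not satisfy the weak reciprocal eigenvalue property: there exists a nonzero eigenvalue λ ∈ ℂ of the adjacency hypermatrix A(G^r) such that 1/λ is not an eigenvalue of A(G^r). -/
open Finset
open scoped Classical

/-- The `r`-th power hypergraph `G^r` of a simple graph `G`: each edge `e = {u, w}` of
`G` is enlarged with `r - 2` new vertices `(e, 0), …, (e, r-3)` into a hyperedge of
size `r`. -/
noncomputable def powerEdges {V : Type*} [Fintype V] [DecidableEq V]
    (G : SimpleGraph V) [DecidableRel G.Adj] (r : ℕ) :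
    Finset (Finset (V ⊕ {e // e ∈ G.edgeFinset} × Fin (r - 2))) :=
  Finset.univ.filter (fun E =>
    ∃ (u w : V) (h : G.Adj u w),
      E = insert (Sum.inl u) (insert (Sum.inl w)
        (Finset.univ.image (fun j : Fin (r - 2) =>
          Sum.inr (⟨s(u, w), SimpleGraph.mem_edgeFinset.mpr ((SimpleGraph.mem_edgeSet G).mpr h)⟩, j)))))

section Reduction
variable {W : Type*} [Fintype W] [DecidableEq W]

lemma card_inj_image (k : ℕ) (S : Finset W) (hS : S.card = k) :
    ((univ : Finset (Fin k → W)).filter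
      (fun f => Function.Injective f ∧ Finset.image f univ = S)).card = k.factorial := by
  classical
  have hcard : Fintype.card S = k := by simp [hS]
  rw [← Fintype.card_subtype]
  have hmem : ∀ (f : Fin k → W), (Function.Injective f ∧ Finset.image f univ = S) →
      ∀ i, f i ∈ S := by
    intro f hf i
    rw [← hf.2]; exact Finset.mem_image_of_mem _ (mem_univ i)
  have hbij : ∀ (f : Fin k → W) (hf : Function.Injective f ∧ Finset.image f univ = S),
      Function.Bijective (fun i => (⟨f i, hmem f hf i⟩ : S)) := by
    intro f hf
    have hinj : Function.Injective (fun i => (⟨f i, hmem f hf i⟩ : S)) :=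
      fun a b hab => hf.1 (congrArg Subtype.val hab)
    exact (Fintype.bijective_iff_injective_and_card _).mpr ⟨hinj, by simp [hcard]⟩
  have e : {f : Fin k → W // Function.Injective f ∧ Finset.image f univ = S} ≃ (Fin k ≃ S) :=
  { toFun := fun f => Equiv.ofBijective _ (hbij f.1 f.2)
    invFun := fun e => ⟨fun i => (e i : W),
      fun a b hab => e.injective (Subtype.ext hab),
      by
        apply Finset.eq_of_subset_of_card_le
        · intro a ha
          simp only [Finset.mem_image, mem_univ, true_and] at ha
          obtain ⟨i, rfl⟩ := ha
          exact (e i).2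
        · rw [hS, Finset.card_image_of_injective _
            (fun a b hab => e.injective (Subtype.ext (hab : (_ : W) = _)))]
          simp⟩
    left_inv := fun f => rfl
    right_inv := fun e => by
      apply Equiv.ext; intro i; apply Subtype.ext; rfl }
  rw [Fintype.card_congr e, Fintype.card_equiv ((Fintype.equivFinOfCardEq hcard).symm)]
  simp

lemma sum_adjEntry (r : ℕ) (E : Finset (Finset W))
    (hE : ∀ e ∈ E, e.card = r) (j : W) (x : W → ℂ) :
    ∑ f : Fin (r - 1) → W, adjEntry r E j f * ∏ i, x (f i)
      = ∑ e ∈ E.filter (fun e => j ∈ e), ∏ v ∈ e.erase j, x v := by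
  classical
  have key :
      ∑ f : Fin (r-1) → W, adjEntry r E j f * ∏ i, x (f i)
        = ∑ f ∈ (univ : Finset (Fin (r-1) → W)).filter
            (fun f => Function.Injective f ∧ (∀ i, f i ≠ j) ∧ insert j (Finset.image f univ) ∈ E),
            (1 / ((r-1).factorial : ℂ)) * ∏ i, x (f i) := by
    rw [Finset.sum_filter]
    apply Finset.sum_congr rfl
    intro f _
    by_cases h : Function.Injective f ∧ (∀ i, f i ≠ j) ∧ insert j (Finset.image f univ) ∈ E
    · simp [adjEntry, h]
    · simp [adjEntry, h]
  rw [key]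
  rw [← Finset.sum_fiberwise_of_maps_to (g := fun f : Fin (r-1) → W => insert j (Finset.image f univ))
      (t := E.filter (fun e => j ∈ e)) (fun f hf => by
        simp only [mem_filter, mem_univ, true_and] at hf ⊢
        exact ⟨hf.2.2, Finset.mem_insert_self _ _⟩)]
  apply Finset.sum_congr rfl
  intro e he
  simp only [mem_filter] at he
  have hej : j ∈ e := he.2
  have hcard : e.card = r := hE e he.1
  have hfilter :
      ((univ : Finset (Fin (r-1) → W)).filter
        (fun f => Function.Injective f ∧ (∀ i, f i ≠ j) ∧ insert j (Finset.image f univ) ∈ E)).filter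
        (fun f => insert j (Finset.image f univ) = e)
      = (univ : Finset (Fin (r-1) → W)).filter
          (fun f => Function.Injective f ∧ Finset.image f univ = e.erase j) := by
    ext f
    simp only [mem_filter, mem_univ, true_and]
    constructor
    · rintro ⟨⟨hinj, hne, _⟩, himg⟩
      refine ⟨hinj, ?_⟩
      have hnot : j ∉ Finset.image f univ := by
        simp only [Finset.mem_image, mem_univ, true_and, not_exists]
        exact fun i => hne i
      rw [← himg, Finset.erase_insert hnot]
    · rintro ⟨hinj, himg⟩
      have hne : ∀ i, f i ≠ j := by
        intro i hij
        have : f i ∈ e.erase j := himg ▸ Finset.mem_image_of_mem _ (mem_univ i)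
        rw [hij] at this
        exact (Finset.notMem_erase j e) this
      have h2 : insert j (Finset.image f univ) = e := by
        rw [himg, Finset.insert_erase hej]
      exact ⟨⟨hinj, hne, h2 ▸ he.1⟩, h2⟩
  rw [hfilter]
  have hprodconst : ∀ f ∈ (univ : Finset (Fin (r-1) → W)).filter
      (fun f => Function.Injective f ∧ Finset.image f univ = e.erase j),
      (1 / ((r-1).factorial : ℂ)) * ∏ i, x (f i)
        = (1 / ((r-1).factorial : ℂ)) * ∏ v ∈ e.erase j, x v := by
    intro f hf
    simp only [mem_filter, mem_univ, true_and] at hf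
    congr 1
    rw [← hf.2, Finset.prod_image (fun a _ b _ hab => hf.1 hab)]
  rw [Finset.sum_congr rfl hprodconst, Finset.sum_const,
    card_inj_image (r-1) (e.erase j) (by rw [Finset.card_erase_of_mem hej, hcard])]
  rw [nsmul_eq_mul]
  have h0 : ((r-1).factorial : ℂ) ≠ 0 := Nat.cast_ne_zero.mpr (Nat.factorial_ne_zero _)
  field_simp

end Reduction
section PE

variable {V : Type*} [Fintype V] [DecidableEq V] (G : SimpleGraph V) [DecidableRel G.Adj] (r : ℕ)

def pe (u w : V) (h : G.Adj u w) : Finset (V ⊕ {e // e ∈ G.edgeFinset} × Fin (r - 2)) :=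
  insert (Sum.inl u) (insert (Sum.inl w)
    (Finset.univ.image (fun j : Fin (r - 2) =>
      Sum.inr (⟨s(u, w), SimpleGraph.mem_edgeFinset.mpr ((SimpleGraph.mem_edgeSet G).mpr h)⟩, j))))

lemma mem_powerEdges (e : Finset (V ⊕ {e // e ∈ G.edgeFinset} × Fin (r - 2))) :
    e ∈ powerEdges G r ↔ ∃ (u w : V) (h : G.Adj u w), e = pe G r u w h := by
  simp [powerEdges, pe]

lemma pe_comm (u w : V) (h : G.Adj u w) : pe G r u w h = pe G r w u h.symm := by
  unfold pe
  rw [Finset.insert_comm]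
  congr 1
  congr 1
  congr 1
  funext j
  congr 1
  exact Prod.ext (Subtype.ext Sym2.eq_swap) rfl

lemma mem_inl_pe (v u w : V) (h : G.Adj u w) :
    Sum.inl v ∈ pe G r u w h ↔ v = u ∨ v = w := by
  simp [pe]

lemma mem_inr_pe (ε : {e // e ∈ G.edgeFinset}) (i : Fin (r - 2)) (u w : V) (h : G.Adj u w) :
    Sum.inr (ε, i) ∈ pe G r u w h ↔ ε.1 = s(u, w) := by
  simp only [pe, Finset.mem_insert, Finset.mem_image, mem_univ, true_and]
  constructor
  · rintro (h1 | h1 | ⟨j, hj⟩)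
    · exact absurd h1 (by simp)
    · exact absurd h1 (by simp)
    · rcases Sum.inr.inj hj with h2
      have := (Prod.ext_iff.mp h2).1
      exact (congrArg Subtype.val this).symm ▸ rfl
  · intro h1
    right; right
    exact ⟨i, by congr 1; exact Prod.ext (Subtype.ext h1.symm) rfl⟩

lemma card_pe (hr : 3 ≤ r) (u w : V) (h : G.Adj u w) : (pe G r u w h).card = r := by
  unfold pe
  have hinj : Function.Injective (fun j : Fin (r - 2) =>
      (Sum.inr (⟨s(u, w), SimpleGraph.mem_edgeFinset.mpr ((SimpleGraph.mem_edgeSet G).mpr h)⟩, j) :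
        V ⊕ {e // e ∈ G.edgeFinset} × Fin (r - 2))) := by
    intro a b hab
    simpa using hab
  rw [Finset.card_insert_of_notMem (by simp [h.ne]),
    Finset.card_insert_of_notMem (by simp),
    Finset.card_image_of_injective _ hinj]
  simp
  omega

lemma prod_pe (u w : V) (h : G.Adj u w) (x : (V ⊕ {e // e ∈ G.edgeFinset} × Fin (r - 2)) → ℂ) :
    ∏ v ∈ pe G r u w h, x v = x (Sum.inl u) * x (Sum.inl w) *
      ∏ j : Fin (r - 2), x (Sum.inr
        (⟨s(u, w), SimpleGraph.mem_edgeFinset.mpr ((SimpleGraph.mem_edgeSet G).mpr h)⟩, j)) := by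
  unfold pe
  have hinj : Function.Injective (fun j : Fin (r - 2) =>
      (Sum.inr (⟨s(u, w), SimpleGraph.mem_edgeFinset.mpr ((SimpleGraph.mem_edgeSet G).mpr h)⟩, j) :
        V ⊕ {e // e ∈ G.edgeFinset} × Fin (r - 2))) := by
    intro a b hab; simpa using hab
  rw [Finset.prod_insert (by simp [h.ne]), Finset.prod_insert (by simp),
    Finset.prod_image (fun a _ b _ hab => hinj hab)]
  ring

lemma pe_eq_iff (u w u' w' : V) (h : G.Adj u w) (h' : G.Adj u' w') (hr : 3 ≤ r) :
    pe G r u w h = pe G r u' w' h' ↔ s(u, w) = s(u', w') := by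
  have hi : (0 : ℕ) < r - 2 := by omega
  constructor
  · intro heq
    have : (Sum.inr (⟨s(u, w), SimpleGraph.mem_edgeFinset.mpr ((SimpleGraph.mem_edgeSet G).mpr h)⟩,
        (⟨0, hi⟩ : Fin (r - 2))) : V ⊕ {e // e ∈ G.edgeFinset} × Fin (r - 2)) ∈ pe G r u w h := by
      rw [mem_inr_pe]
    rw [heq, mem_inr_pe] at this
    exact this
  · intro hs
    rcases Sym2.eq_iff.mp hs with ⟨h1, h2⟩ | ⟨h1, h2⟩
    · subst h1; subst h2; rfl
    · subst h1; subst h2; exact pe_comm G r _ _ h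

end PE

section Filters
variable {V : Type*} [Fintype V] [DecidableEq V] (G : SimpleGraph V) [DecidableRel G.Adj] (r : ℕ)

noncomputable def peD (u w : V) : Finset (V ⊕ {e // e ∈ G.edgeFinset} × Fin (r - 2)) :=
  if h : G.Adj u w then pe G r u w h else ∅

lemma peD_adj (u w : V) (h : G.Adj u w) : peD G r u w = pe G r u w h := dif_pos h

lemma filter_inl (v : V) :
    (powerEdges G r).filter (fun e => Sum.inl v ∈ e)
      = (G.neighborFinset v).image (peD G r v) := by
  ext e
  simp only [mem_filter, mem_powerEdges, Finset.mem_image, SimpleGraph.mem_neighborFinset]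
  constructor
  · rintro ⟨⟨u, w, h, rfl⟩, hv⟩
    rcases (mem_inl_pe G r v u w h).mp hv with rfl | rfl
    · exact ⟨w, h, (peD_adj G r v w h).symm ▸ rfl⟩
    · exact ⟨u, h.symm, by rw [peD_adj G r v u h.symm, ← pe_comm]⟩
  · rintro ⟨w, hw, rfl⟩
    rw [peD_adj G r v w hw]
    exact ⟨⟨v, w, hw, rfl⟩, (mem_inl_pe G r v v w hw).mpr (Or.inl rfl)⟩

lemma filter_inr (hr : 3 ≤ r) (ε : {e // e ∈ G.edgeFinset}) (i : Fin (r - 2))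
    (a b : V) (h : G.Adj a b) (hs : ε.1 = s(a, b)) :
    (powerEdges G r).filter (fun e => Sum.inr (ε, i) ∈ e) = {pe G r a b h} := by
  ext e
  simp only [mem_filter, mem_powerEdges, Finset.mem_singleton]
  constructor
  · rintro ⟨⟨u, w, h', rfl⟩, hv⟩
    have h1 := (mem_inr_pe G r ε i u w h').mp hv
    exact (pe_eq_iff G r u w a b h' h hr).mpr (h1 ▸ hs)
  · rintro rfl
    exact ⟨⟨a, b, h, rfl⟩, (mem_inr_pe G r ε i a b h).mpr hs⟩

lemma powerEdges_card (hr : 3 ≤ r) : ∀ e ∈ powerEdges G r, e.card = r := by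
  intro e he
  rcases (mem_powerEdges G r e).mp he with ⟨u, w, h, rfl⟩
  exact card_pe G r hr u w h

end Filters
open Finset Polynomial

lemma eval_charpoly_det {n : Type*} [Fintype n] [DecidableEq n] (A : Matrix n n ℂ) (μ : ℂ) :
    A.charpoly.eval μ = (μ • (1 : Matrix n n ℂ) - A).det := by
  rw [Matrix.charpoly]
  rw [show Polynomial.eval μ (A.charmatrix).det
      = ((A.charmatrix).map (Polynomial.evalRingHom μ)).det from
    (RingHom.map_det (Polynomial.evalRingHom μ) A.charmatrix).symm ▸ rfl]
  congr 1
  ext i j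
  by_cases hij : i = j
  · subst hij
    simp [Matrix.charmatrix_apply, Matrix.one_apply, Matrix.diagonal]
  · simp [Matrix.charmatrix_apply, Matrix.one_apply, Matrix.diagonal, hij]

lemma int_eigen {n : Type*} [Fintype n] [DecidableEq n] (M : Matrix n n ℤ) (μ : ℂ)
    (α : n → ℂ) (hα : α ≠ 0) (heq : ∀ u, ∑ w, (M u w : ℂ) * α w = μ * α u) :
    IsIntegral ℤ μ := by
  set M' : Matrix n n ℂ := M.map (Int.cast : ℤ → ℂ) with hM'
  have hmv : (μ • (1 : Matrix n n ℂ) - M').mulVec α = 0 := by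
    funext u
    have h1 : M'.mulVec α u = μ * α u := by
      simp only [Matrix.mulVec, dotProduct, hM', Matrix.map_apply]
      exact heq u
    simp [Matrix.sub_mulVec, Matrix.smul_mulVec, Matrix.one_mulVec, h1, Pi.smul_apply,
      smul_eq_mul]
  have hdet : (μ • (1 : Matrix n n ℂ) - M').det = 0 :=
    Matrix.exists_mulVec_eq_zero_iff.mp ⟨α, hα, hmv⟩
  refine ⟨M.charpoly, M.charpoly_monic, ?_⟩
  have : Polynomial.eval₂ (algebraMap ℤ ℂ) μ M.charpoly
      = (M.charpoly.map (algebraMap ℤ ℂ)).eval μ := by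
    rw [Polynomial.eval₂_eq_eval_map]
  rw [this]
  have hmap : M.charpoly.map (algebraMap ℤ ℂ) = M'.charpoly := by
    rw [hM', algebraMap_int_eq]
    exact (Matrix.charpoly_map M (Int.castRingHom ℂ)).symm
  rw [hmap, eval_charpoly_det, hdet]

lemma half_not_integral : ¬ IsIntegral ℤ ((2 : ℂ)⁻¹) := by
  intro h
  have h2 : (algebraMap ℚ ℂ) ((2 : ℚ)⁻¹) = (2 : ℂ)⁻¹ := by
    push_cast
    simp
  rw [← h2] at h
  have h3 : IsIntegral ℤ ((2 : ℚ)⁻¹) :=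
    IsIntegral.tower_bot (algebraMap ℚ ℂ).injective h
  obtain ⟨y, hy⟩ := IsIntegrallyClosed.isIntegral_iff.mp h3
  have : ((2 * y : ℤ) : ℚ) = 1 := by
    push_cast
    rw [show ((y:ℚ)) = (2:ℚ)⁻¹ from hy]
    norm_num
  have : (2 * y : ℤ) = 1 := by exact_mod_cast this
  omega

section More
variable {V : Type*} [Fintype V] [DecidableEq V] (G : SimpleGraph V) [DecidableRel G.Adj] (r : ℕ)

lemma prod_pe_erase_inl (u w : V) (h : G.Adj u w)
    (x : (V ⊕ {e // e ∈ G.edgeFinset} × Fin (r - 2)) → ℂ) :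
    ∏ v ∈ (pe G r u w h).erase (Sum.inl u), x v
      = x (Sum.inl w) * ∏ j : Fin (r - 2), x (Sum.inr
        (⟨s(u, w), SimpleGraph.mem_edgeFinset.mpr ((SimpleGraph.mem_edgeSet G).mpr h)⟩, j)) := by
  unfold pe
  have hinj : Function.Injective (fun j : Fin (r - 2) =>
      (Sum.inr (⟨s(u, w), SimpleGraph.mem_edgeFinset.mpr ((SimpleGraph.mem_edgeSet G).mpr h)⟩, j) :
        V ⊕ {e // e ∈ G.edgeFinset} × Fin (r - 2))) := by
    intro a b hab; simpa using hab
  rw [Finset.erase_insert (by simp [h.ne]), Finset.prod_insert (by simp),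
    Finset.prod_image (fun a _ b _ hab => hinj hab)]

lemma prod_pe_erase_inr (u w : V) (h : G.Adj u w) (ε : {e // e ∈ G.edgeFinset})
    (hε : ε.1 = s(u, w)) (i : Fin (r - 2))
    (x : (V ⊕ {e // e ∈ G.edgeFinset} × Fin (r - 2)) → ℂ) :
    ∏ v ∈ (pe G r u w h).erase (Sum.inr (ε, i)), x v
      = x (Sum.inl u) * x (Sum.inl w) * ∏ j ∈ Finset.univ.erase i, x (Sum.inr (ε, j)) := by
  obtain ⟨εv, hεm⟩ := ε
  simp only at hε
  subst hε
  unfold pe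
  have hinj : Function.Injective (fun j : Fin (r - 2) =>
      (Sum.inr ((⟨s(u, w), hεm⟩ : {e // e ∈ G.edgeFinset}), j) :
        V ⊕ {e // e ∈ G.edgeFinset} × Fin (r - 2))) := by
    intro a b hab; simpa using hab
  have hpe : (⟨s(u, w), SimpleGraph.mem_edgeFinset.mpr ((SimpleGraph.mem_edgeSet G).mpr h)⟩ :
      {e // e ∈ G.edgeFinset}) = ⟨s(u, w), hεm⟩ := rfl
  rw [hpe]
  rw [Finset.erase_insert_of_ne (by simp), Finset.erase_insert_of_ne (by simp),
    ← Finset.image_erase hinj Finset.univ i,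
    Finset.prod_insert (by simp [h.ne]), Finset.prod_insert (by simp),
    Finset.prod_image (fun a _ b _ hab => hinj hab), mul_assoc]

lemma peD_inj (a : V) : ∀ w1 ∈ G.neighborFinset a, ∀ w2 ∈ G.neighborFinset a,
    peD G r a w1 = peD G r a w2 → w1 = w2 := by
  intro w1 h1 w2 h2 heq
  rw [SimpleGraph.mem_neighborFinset] at h1 h2
  rw [peD_adj G r a w1 h1, peD_adj G r a w2 h2] at heq
  have hi : (0 : ℕ) < r - 2 ∨ True := Or.inr trivial
  have : (Sum.inl w1 : V ⊕ {e // e ∈ G.edgeFinset} × Fin (r - 2)) ∈ pe G r a w2 h2 := by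
    rw [← heq, mem_inl_pe]; right; rfl
  rcases (mem_inl_pe G r w1 a w2 h2).mp this with h3 | h3
  · exact absurd h3 h1.ne'
  · exact h3

lemma eig_equations (hr : 3 ≤ r) {lam : ℂ}
    {x : (V ⊕ {e // e ∈ G.edgeFinset} × Fin (r - 2)) → ℂ}
    (hx : IsEigenpair r (adjEntry r (powerEdges G r)) lam x) :
    ∀ j, ∑ e ∈ (powerEdges G r).filter (fun e => j ∈ e), ∏ v ∈ e.erase j, x v
      = lam * x j ^ (r - 1) := by
  intro j
  rw [← sum_adjEntry r (powerEdges G r) (powerEdges_card G r hr) j x]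
  exact hx.2 j

lemma eig_of (hr : 3 ≤ r) {lam : ℂ}
    {x : (V ⊕ {e // e ∈ G.edgeFinset} × Fin (r - 2)) → ℂ} (hx0 : x ≠ 0)
    (h : ∀ j, ∑ e ∈ (powerEdges G r).filter (fun e => j ∈ e), ∏ v ∈ e.erase j, x v
      = lam * x j ^ (r - 1)) :
    IsEigenpair r (adjEntry r (powerEdges G r)) lam x := by
  refine ⟨hx0, fun j => ?_⟩
  rw [sum_adjEntry r (powerEdges G r) (powerEdges_card G r hr) j x]
  exact h j

end More
section StepB
variable {V : Type*} [Fintype V] [DecidableEq V] (G : SimpleGraph V) [DecidableRel G.Adj] (r : ℕ)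

lemma stepB (hr : 3 ≤ r) {lam : ℂ} (hlam : lam ≠ 0)
    {x : (V ⊕ {e // e ∈ G.edgeFinset} × Fin (r - 2)) → ℂ}
    (hx : IsEigenpair r (adjEntry r (powerEdges G r)) lam x) :
    ∃ μ : ℂ, IsIntegral ℤ μ ∧ μ ^ 2 = lam ^ r := by
  classical
  have hrm : r - 1 + 1 = r := by omega
  have hr2 : (0 : ℕ) < r - 2 := by omega
  set i0 : Fin (r - 2) := ⟨0, hr2⟩ with hi0
  have heq := eig_equations G r hr hx
  have heqm : ∀ j, ∑ e ∈ (powerEdges G r).filter (fun e => j ∈ e), ∏ v ∈ e, x v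
      = lam * x j ^ r := by
    intro j
    have h1 := congrArg (fun z => z * x j) (heq j)
    simp only [Finset.sum_mul] at h1
    calc ∑ e ∈ (powerEdges G r).filter (fun e => j ∈ e), ∏ v ∈ e, x v
        = ∑ e ∈ (powerEdges G r).filter (fun e => j ∈ e), (∏ v ∈ e.erase j, x v) * x j :=
          Finset.sum_congr rfl (fun e he => (Finset.prod_erase_mul e x (mem_filter.mp he).2).symm)
      _ = lam * x j ^ (r - 1) * x j := h1
      _ = lam * x j ^ r := by rw [mul_assoc, ← pow_succ, hrm]
  set T : V → V → ℂ := fun u w => if h : G.Adj u w then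
      x (Sum.inr (⟨s(u, w),
        SimpleGraph.mem_edgeFinset.mpr ((SimpleGraph.mem_edgeSet G).mpr h)⟩, i0)) ^ r
    else 0 with hTdef
  have hT : ∀ (u w : V) (h : G.Adj u w), T u w = x (Sum.inr (⟨s(u, w),
      SimpleGraph.mem_edgeFinset.mpr ((SimpleGraph.mem_edgeSet G).mpr h)⟩, i0)) ^ r :=
    fun u w h => dif_pos h
  have hedge : ∀ (u w : V) (h : G.Adj u w) (ε : {e // e ∈ G.edgeFinset})
      (hε : ε.1 = s(u, w)) (i : Fin (r - 2)),
      ∏ v ∈ pe G r u w h, x v = lam * x (Sum.inr (ε, i)) ^ r := by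
    intro u w h ε hε i
    have h1 := heqm (Sum.inr (ε, i))
    rwa [filter_inr G r hr ε i u w h hε, Finset.sum_singleton] at h1
  have hTval : ∀ (u w : V) (h : G.Adj u w) (ε : {e // e ∈ G.edgeFinset})
      (hε : ε.1 = s(u, w)) (i : Fin (r - 2)),
      x (Sum.inr (ε, i)) ^ r = T u w := by
    intro u w h ε hε i
    have h1 := hedge u w h ε hε i
    have h2 := hedge u w h ⟨s(u, w),
      SimpleGraph.mem_edgeFinset.mpr ((SimpleGraph.mem_edgeSet G).mpr h)⟩ rfl i0
    rw [hT u w h]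
    exact mul_left_cancel₀ hlam (h1.symm.trans h2)
  have hPi : ∀ (u w : V) (h : G.Adj u w), ∏ v ∈ pe G r u w h, x v = lam * T u w := by
    intro u w h
    rw [hedge u w h ⟨s(u, w),
      SimpleGraph.mem_edgeFinset.mpr ((SimpleGraph.mem_edgeSet G).mpr h)⟩ rfl i0, hT u w h]
  set z : V → ℂ := fun u => x (Sum.inl u) ^ r with hzdef
  have hzeq : ∀ u, z u = ∑ w ∈ G.neighborFinset u, T u w := by
    intro u
    have h1 := heqm (Sum.inl u)
    rw [filter_inl G r u, Finset.sum_image (peD_inj G r u)] at h1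
    have h2 : ∀ w ∈ G.neighborFinset u, ∏ v ∈ peD G r u w, x v = lam * T u w := by
      intro w hw
      rw [SimpleGraph.mem_neighborFinset] at hw
      have hadj := hw
      rw [peD_adj G r u w hadj, hPi u w hadj]
    rw [Finset.sum_congr rfl h2, ← Finset.mul_sum] at h1
    exact (mul_left_cancel₀ hlam h1).symm
  have hE3 : ∀ u w, G.Adj u w → T u w ≠ 0 → lam ^ r * T u w ^ 2 = z u * z w := by
    intro u w h hT0
    have hP : (∏ i : Fin (r - 2), x (Sum.inr (⟨s(u, w),
        SimpleGraph.mem_edgeFinset.mpr ((SimpleGraph.mem_edgeSet G).mpr h)⟩, i))) ^ r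
        = T u w ^ (r - 2) := by
      rw [← Finset.prod_pow, Finset.prod_congr rfl (fun i _ => hTval u w h _ rfl i),
        Finset.prod_const, Finset.card_univ, Fintype.card_fin]
    have hkey : (lam * T u w) ^ r = z u * z w * T u w ^ (r - 2) := by
      rw [← hPi u w h, prod_pe G r u w h x, mul_pow, mul_pow, hP, hzdef]
    have hTr : T u w ^ r = T u w ^ 2 * T u w ^ (r - 2) := by
      rw [← pow_add]; congr 1; omega
    rw [mul_pow, hTr, ← mul_assoc] at hkey
    exact mul_right_cancel₀ (pow_ne_zero _ hT0) hkey
  have hrne : r ≠ 0 := by omega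
  have hnz : ∃ u, z u ≠ 0 := by
    by_contra hno
    push_neg at hno
    apply hx.1
    funext v
    have hxl : ∀ u, x (Sum.inl u) = 0 := fun u => pow_eq_zero_iff hrne |>.mp (hno u)
    cases v with
    | inl u => exact hxl u
    | inr p =>
      obtain ⟨ε, i⟩ := p
      obtain ⟨⟨a, b⟩, hab⟩ := Quot.exists_rep ε.1
      have hab' : ε.1 = s(a, b) := hab.symm
      have hadj : G.Adj a b := by
        have := ε.2
        rw [SimpleGraph.mem_edgeFinset, hab'] at this
        exact this
      have h1 : x (Sum.inr (ε, i)) ^ r = T a b := hTval a b hadj ε hab' i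
      have h2 : lam * T a b = 0 := by
        rw [← hPi a b hadj, prod_pe G r a b hadj x, hxl a]
        ring
      have h3 : T a b = 0 := by
        rcases mul_eq_zero.mp h2 with h | h
        · exact absurd h hlam
        · exact h
      exact pow_eq_zero_iff hrne |>.mp (h1.trans h3)
  set μ : ℂ := (lam ^ r) ^ (((2 : ℕ) : ℂ))⁻¹ with hμdef
  have hμ2 : μ ^ 2 = lam ^ r := Complex.cpow_nat_inv_pow _ (by norm_num)
  set α : V → ℂ := fun v => (z v) ^ (((2 : ℕ) : ℂ))⁻¹ with hαdef
  have hα2 : ∀ v, α v ^ 2 = z v := fun v => Complex.cpow_nat_inv_pow _ (by norm_num)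
  have hα0 : ∀ v, z v = 0 → α v = 0 := by
    intro v hv
    rw [hαdef]
    simp only [hv]
    exact Complex.zero_cpow (by norm_num)
  have hα0' : ∀ v, α v = 0 → z v = 0 := by
    intro v hv
    rw [← hα2 v, hv]
    ring
  set σ : V → V → ℂ := fun u w => μ * T u w / (α u * α w) with hσdef
  have hzz : ∀ u w, G.Adj u w → T u w ≠ 0 → z u ≠ 0 ∧ z w ≠ 0 := by
    intro u w h hT0
    have h1 : z u * z w ≠ 0 := by
      rw [← hE3 u w h hT0]
      exact mul_ne_zero (pow_ne_zero _ hlam) (pow_ne_zero _ hT0)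
    exact ⟨fun hc => h1 (by rw [hc, zero_mul]), fun hc => h1 (by rw [hc, mul_zero])⟩
  have hσval : ∀ u w, G.Adj u w → T u w ≠ 0 → σ u w = 1 ∨ σ u w = -1 := by
    intro u w h hT0
    obtain ⟨hzu, hzw⟩ := hzz u w h hT0
    have hαu : α u ≠ 0 := fun hc => hzu (hα0' u hc)
    have hαw : α w ≠ 0 := fun hc => hzw (hα0' w hc)
    have hsq : σ u w ^ 2 = 1 := by
      rw [hσdef]
      have : (μ * T u w / (α u * α w)) ^ 2 = μ ^ 2 * T u w ^ 2 / (α u ^ 2 * α w ^ 2) := by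
        field_simp
      rw [this, hμ2, hα2, hα2, ← hE3 u w h hT0]
      field_simp
    have hfac : (σ u w - 1) * (σ u w + 1) = 0 := by
      have : σ u w ^ 2 - 1 = 0 := by rw [hsq]; ring
      calc (σ u w - 1) * (σ u w + 1) = σ u w ^ 2 - 1 := by ring
        _ = 0 := this
    rcases mul_eq_zero.mp hfac with h1 | h1
    · left; exact sub_eq_zero.mp h1
    · right; exact eq_neg_of_add_eq_zero_left h1
  set M : Matrix V V ℤ := fun u w => if G.Adj u w ∧ T u w ≠ 0 then (if σ u w = 1 then 1 else -1) else 0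
    with hMdef
  have hrow : ∀ u, ∑ w, (M u w : ℂ) * α w = μ * α u := by
    intro u
    have hMc : ∀ w, (M u w : ℂ) * α w = if G.Adj u w ∧ T u w ≠ 0 then σ u w * α w else 0 := by
      intro w
      by_cases hc : G.Adj u w ∧ T u w ≠ 0
      · rw [if_pos hc]
        have hM : M u w = if σ u w = 1 then 1 else -1 := by
          simp only [hMdef]
          exact if_pos hc
        rcases hσval u w hc.1 hc.2 with h1 | h1
        · rw [hM, if_pos h1, h1]; norm_num
        · rw [hM, if_neg (by rw [h1]; norm_num), h1]; norm_num
      · rw [if_neg hc]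
        have hM : M u w = 0 := by
          simp only [hMdef]
          exact if_neg hc
        rw [hM]; norm_num
    rw [Finset.sum_congr rfl (fun w _ => hMc w), ← Finset.sum_filter]
    by_cases hzu : z u = 0
    · have hemp : Finset.univ.filter (fun w => G.Adj u w ∧ T u w ≠ 0) = ∅ := by
        ext w
        simp only [Finset.mem_filter, Finset.mem_univ, true_and, Finset.notMem_empty,
          iff_false, not_and]
        intro hadj hT0
        exact (hzz u w hadj hT0).1 hzu
      rw [hemp, Finset.sum_empty, hα0 u hzu, mul_zero]
    · have hαu : α u ≠ 0 := fun hc => hzu (hα0' u hc)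
      apply mul_left_cancel₀ hαu
      rw [Finset.mul_sum]
      have hterm : ∀ w ∈ Finset.univ.filter (fun w => G.Adj u w ∧ T u w ≠ 0),
          α u * (σ u w * α w) = μ * T u w := by
        intro w hw
        simp only [Finset.mem_filter, Finset.mem_univ, true_and] at hw
        obtain ⟨hadj, hT0⟩ := hw
        have hαw : α w ≠ 0 := fun hc => (hzz u w hadj hT0).2 (hα0' w hc)
        rw [hσdef]
        field_simp
      rw [Finset.sum_congr rfl hterm, ← Finset.mul_sum]
      have hfilt : Finset.univ.filter (fun w => G.Adj u w ∧ T u w ≠ 0)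
          = (G.neighborFinset u).filter (fun w => T u w ≠ 0) := by
        ext w
        simp [SimpleGraph.mem_neighborFinset]
      have hsum : ∑ w ∈ Finset.univ.filter (fun w => G.Adj u w ∧ T u w ≠ 0), T u w
          = ∑ w ∈ G.neighborFinset u, T u w := by
        rw [hfilt]
        exact Finset.sum_filter_of_ne (fun w _ h => h)
      rw [hsum, ← hzeq u, ← hα2 u]
      ring
  have hαne : α ≠ 0 := by
    obtain ⟨u, hu⟩ := hnz
    intro hc
    exact hu (hα0' u (congrFun hc u))
  exact ⟨μ, int_eigen M μ α hαne hrow, hμ2⟩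

end StepB
section Positive
variable {V : Type*} [Fintype V] [DecidableEq V] (G : SimpleGraph V) [DecidableRel G.Adj] (r : ℕ)

lemma positive_part (hr : 3 ≤ r) (c u w : V) (hcu : G.Adj c u) (hcw : G.Adj c w)
    (hne : u ≠ w) (hnadj : ¬ G.Adj u w) {lam : ℂ} (hl2 : lam ^ r = 2) (hl0 : lam ≠ 0) :
    ∃ x, IsEigenpair r (adjEntry r (powerEdges G r)) lam x := by
  classical
  have hr2 : (0 : ℕ) < r - 2 := by omega
  have hrm : r - 1 + 1 = r := by omega
  have hr1 : r - 1 ≠ 0 := by omega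
  set i0 : Fin (r - 2) := ⟨0, hr2⟩ with hi0
  have hcun : c ≠ u := hcu.ne
  have hcwn : c ≠ w := hcw.ne
  set x : (V ⊕ {e // e ∈ G.edgeFinset} × Fin (r - 2)) → ℂ :=
    Sum.elim (fun a => if a = c then lam else if a = u ∨ a = w then 1 else 0)
      (fun p => if p.1.1 = s(c, u) ∨ p.1.1 = s(c, w) then 1 else 0) with hxdef
  have hxc : x (Sum.inl c) = lam := by simp [hxdef]
  have hxu : x (Sum.inl u) = 1 := by simp [hxdef, hcun.symm]
  have hxw : x (Sum.inl w) = 1 := by simp [hxdef, hcwn.symm, hne]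
  have hxo : ∀ a : V, a ≠ c → a ≠ u → a ≠ w → x (Sum.inl a) = 0 := by
    intro a h1 h2 h3; simp [hxdef, h1, h2, h3]
  have hxr : ∀ (ε : {e // e ∈ G.edgeFinset}) (i : Fin (r - 2)),
      x (Sum.inr (ε, i)) = if ε.1 = s(c, u) ∨ ε.1 = s(c, w) then 1 else 0 := by
    intro ε i; simp [hxdef]
  have hx0 : x ≠ 0 := by
    intro hzero
    apply hl0
    rw [← hxc, hzero]
    rfl
  refine ⟨x, eig_of G r hr hx0 ?_⟩
  intro j
  cases j with
  | inl a =>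
    rw [filter_inl G r a, Finset.sum_image (peD_inj G r a)]
    have hterm : ∀ w' ∈ G.neighborFinset a,
        ∏ v ∈ (peD G r a w').erase (Sum.inl a), x v
          = x (Sum.inl w') * (if s(a, w') = s(c, u) ∨ s(a, w') = s(c, w) then 1 else 0) := by
      intro w' hw'
      rw [SimpleGraph.mem_neighborFinset] at hw'
      rw [peD_adj G r a w' hw', prod_pe_erase_inl G r a w' hw' x]
      congr 1
      by_cases hC : s(a, w') = s(c, u) ∨ s(a, w') = s(c, w)
      · rw [if_pos hC]
        apply Finset.prod_eq_one
        intro i _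
        rw [hxr _ i]
        exact if_pos hC
      · rw [if_neg hC]
        apply Finset.prod_eq_zero (Finset.mem_univ i0)
        rw [hxr _ i0]
        exact if_neg hC
    rw [Finset.sum_congr rfl hterm]
    by_cases hac : a = c
    · subst hac
      have hterm2 : ∀ w' ∈ G.neighborFinset a,
          x (Sum.inl w') * (if s(a, w') = s(a, u) ∨ s(a, w') = s(a, w) then 1 else 0)
            = if w' = u ∨ w' = w then 1 else 0 := by
        intro w' _
        by_cases h1 : w' = u
        · rw [h1, hxu]; simp
        · by_cases h2 : w' = w
          · rw [h2, hxw]; simp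
          · have hcond : ¬(s(a, w') = s(a, u) ∨ s(a, w') = s(a, w)) := by
              rintro (hh | hh)
              · rcases Sym2.eq_iff.mp hh with ⟨_, h⟩ | ⟨h, _⟩
                · exact h1 h
                · exact hcun h
              · rcases Sym2.eq_iff.mp hh with ⟨_, h⟩ | ⟨h, _⟩
                · exact h2 h
                · exact hcwn h
            rw [if_neg hcond, mul_zero, if_neg (by tauto)]
      rw [Finset.sum_congr rfl hterm2, Finset.sum_boole]
      have hfil : (G.neighborFinset a).filter (fun w' => w' = u ∨ w' = w) = {u, w} := by
        ext y
        simp only [Finset.mem_filter, SimpleGraph.mem_neighborFinset, Finset.mem_insert,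
          Finset.mem_singleton]
        constructor
        · rintro ⟨_, h⟩; exact h
        · rintro (rfl | rfl)
          · exact ⟨hcu, Or.inl rfl⟩
          · exact ⟨hcw, Or.inr rfl⟩
      rw [hfil, Finset.card_pair hne, hxc]
      rw [show lam * lam ^ (r - 1) = lam ^ (r - 1 + 1) from (pow_succ' lam (r - 1)).symm, hrm, hl2]
      norm_num
    · by_cases hau : a = u
      · subst hau
        have hterm2 : ∀ w' ∈ G.neighborFinset a,
            x (Sum.inl w') * (if s(a, w') = s(c, a) ∨ s(a, w') = s(c, w) then 1 else 0)
              = if w' = c then lam else 0 := by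
          intro w' _
          by_cases h1 : w' = c
          · rw [h1, hxc, if_pos (Or.inl Sym2.eq_swap), mul_one, if_pos rfl]
          · have hcond : ¬(s(a, w') = s(c, a) ∨ s(a, w') = s(c, w)) := by
              rintro (hh | hh)
              · rcases Sym2.eq_iff.mp hh with ⟨h, _⟩ | ⟨_, h⟩
                · exact hcun h.symm
                · exact h1 h
              · rcases Sym2.eq_iff.mp hh with ⟨h, _⟩ | ⟨h, _⟩
                · exact hcun h.symm
                · exact hne h
            rw [if_neg hcond, mul_zero, if_neg h1]
        rw [Finset.sum_congr rfl hterm2, Finset.sum_ite_eq' (G.neighborFinset a) c (fun _ => lam),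
          if_pos (SimpleGraph.mem_neighborFinset _ _ _ |>.mpr hcu.symm), hxu, one_pow, mul_one]
      · by_cases haw : a = w
        · subst haw
          have hterm2 : ∀ w' ∈ G.neighborFinset a,
              x (Sum.inl w') * (if s(a, w') = s(c, u) ∨ s(a, w') = s(c, a) then 1 else 0)
                = if w' = c then lam else 0 := by
            intro w' _
            by_cases h1 : w' = c
            · rw [h1, hxc, if_pos (Or.inr Sym2.eq_swap), mul_one, if_pos rfl]
            · have hcond : ¬(s(a, w') = s(c, u) ∨ s(a, w') = s(c, a)) := by
                rintro (hh | hh)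
                · rcases Sym2.eq_iff.mp hh with ⟨h, _⟩ | ⟨h, _⟩
                  · exact hcwn h.symm
                  · exact hne h.symm
                · rcases Sym2.eq_iff.mp hh with ⟨h, _⟩ | ⟨_, h⟩
                  · exact hcwn h.symm
                  · exact h1 h
              rw [if_neg hcond, mul_zero, if_neg h1]
          rw [Finset.sum_congr rfl hterm2, Finset.sum_ite_eq' (G.neighborFinset a) c (fun _ => lam),
            if_pos (SimpleGraph.mem_neighborFinset _ _ _ |>.mpr hcw.symm), hxw, one_pow, mul_one]
        · have hterm2 : ∀ w' ∈ G.neighborFinset a,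
              x (Sum.inl w') * (if s(a, w') = s(c, u) ∨ s(a, w') = s(c, w) then 1 else 0)
                = 0 := by
            intro w' _
            have hcond : ¬(s(a, w') = s(c, u) ∨ s(a, w') = s(c, w)) := by
              rintro (hh | hh)
              · rcases Sym2.eq_iff.mp hh with ⟨h, _⟩ | ⟨h, _⟩
                · exact hac h
                · exact hau h
              · rcases Sym2.eq_iff.mp hh with ⟨h, _⟩ | ⟨h, _⟩
                · exact hac h
                · exact haw h
            rw [if_neg hcond, mul_zero]
          rw [Finset.sum_congr rfl hterm2, Finset.sum_const_zero, hxo a hac hau haw,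
            zero_pow hr1, mul_zero]
  | inr p =>
    obtain ⟨ε, i⟩ := p
    obtain ⟨εv, hεm⟩ := ε
    revert hεm
    refine Sym2.ind (fun a b => ?_) εv
    intro hεm
    have hadj : G.Adj a b := by rwa [SimpleGraph.mem_edgeFinset] at hεm
    rw [filter_inr G r hr ⟨s(a, b), hεm⟩ i a b hadj rfl, Finset.sum_singleton,
      prod_pe_erase_inr G r a b hadj ⟨s(a, b), hεm⟩ rfl i x]
    by_cases hC : s(a, b) = s(c, u) ∨ s(a, b) = s(c, w)
    · have hprod : ∏ j ∈ Finset.univ.erase i,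
          x (Sum.inr ((⟨s(a, b), hεm⟩ : {e // e ∈ G.edgeFinset}), j)) = 1 := by
        apply Finset.prod_eq_one
        intro k _
        rw [hxr _ k]
        exact if_pos hC
      have hxri : x (Sum.inr ((⟨s(a, b), hεm⟩ : {e // e ∈ G.edgeFinset}), i)) = 1 := by
        rw [hxr _ i]; exact if_pos hC
      rw [hprod, hxri, one_pow, mul_one, mul_one]
      have hab2 : x (Sum.inl a) * x (Sum.inl b) = lam := by
        rcases hC with hh | hh
        · rcases Sym2.eq_iff.mp hh with ⟨h1, h2⟩ | ⟨h1, h2⟩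
          · subst h1; subst h2; rw [hxc, hxu, mul_one]
          · subst h1; subst h2; rw [hxc, hxu, one_mul]
        · rcases Sym2.eq_iff.mp hh with ⟨h1, h2⟩ | ⟨h1, h2⟩
          · subst h1; subst h2; rw [hxc, hxw, mul_one]
          · subst h1; subst h2; rw [hxc, hxw, one_mul]
      exact hab2
    · have hxri : x (Sum.inr ((⟨s(a, b), hεm⟩ : {e // e ∈ G.edgeFinset}), i)) = 0 := by
        rw [hxr _ i]; exact if_neg hC
      rw [hxri, zero_pow hr1, mul_zero]
      push_neg at hC
      obtain ⟨hC1, hC2⟩ := hC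
      have h1 : ¬(a = c ∧ b = u) ∧ ¬(a = u ∧ b = c) := by
        constructor <;> rintro ⟨h1, h2⟩ <;> exact hC1 (Sym2.eq_iff.mpr (by tauto))
      have h2 : ¬(a = c ∧ b = w) ∧ ¬(a = w ∧ b = c) := by
        constructor <;> rintro ⟨h1, h2⟩ <;> exact hC2 (Sym2.eq_iff.mpr (by tauto))
      have h3 : ¬(a = u ∧ b = w) := by
        rintro ⟨rfl, rfl⟩; exact hnadj hadj
      have h3' : ¬(a = w ∧ b = u) := by
        rintro ⟨rfl, rfl⟩; exact hnadj hadj.symm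
      have h4 : ¬(a = c ∧ b = c) := by
        rintro ⟨rfl, rfl⟩; exact hadj.ne rfl
      have h5 : ¬(a = u ∧ b = u) := by
        rintro ⟨rfl, rfl⟩; exact hadj.ne rfl
      have h6 : ¬(a = w ∧ b = w) := by
        rintro ⟨rfl, rfl⟩; exact hadj.ne rfl
      have key : (a ≠ c ∧ a ≠ u ∧ a ≠ w) ∨ (b ≠ c ∧ b ≠ u ∧ b ≠ w) := by
        by_cases k1 : a = c
        · exact Or.inr ⟨fun hb => h4 ⟨k1, hb⟩, fun hb => h1.1 ⟨k1, hb⟩, fun hb => h2.1 ⟨k1, hb⟩⟩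
        by_cases k2 : a = u
        · exact Or.inr ⟨fun hb => h1.2 ⟨k2, hb⟩, fun hb => h5 ⟨k2, hb⟩, fun hb => h3 ⟨k2, hb⟩⟩
        by_cases k3 : a = w
        · exact Or.inr ⟨fun hb => h2.2 ⟨k3, hb⟩, fun hb => h3' ⟨k3, hb⟩, fun hb => h6 ⟨k3, hb⟩⟩
        · exact Or.inl ⟨k1, k2, k3⟩
      rcases key with ⟨k1, k2, k3⟩ | ⟨k1, k2, k3⟩
      · rw [hxo a k1 k2 k3, zero_mul, zero_mul]
      · rw [hxo b k1 k2 k3, mul_zero, zero_mul]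

end Positive
/-- a power hypertree `G^r` (`G` a tree with at least two edges, `r ≥ 3`)
does not satisfy the weak reciprocal eigenvalue property: it has a nonzero adjacency
eigenvalue `λ` such that `1/λ` is not an eigenvalue. -/
theorem stmt19 {V : Type*} [Fintype V] [DecidableEq V]
    (G : SimpleGraph V) [DecidableRel G.Adj]
    (hT : G.IsTree) (hE : 2 ≤ G.edgeFinset.card) (r : ℕ) (hr : 3 ≤ r) :
    ∃ lam : ℂ, lam ≠ 0 ∧
      (∃ x, IsEigenpair r (adjEntry r (powerEdges G r)) lam x) ∧
      ¬ ∃ x, IsEigenpair r (adjEntry r (powerEdges G r)) (1 / lam) x := by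
  classical
  have hrne : r ≠ 0 := by omega
  -- find a vertex of degree at least two
  have hdeg : ∃ c, 2 ≤ G.degree c := by
    by_contra hno
    push_neg at hno
    have hsum := G.sum_degrees_eq_twice_card_edges
    have hle : ∑ v, G.degree v ≤ Fintype.card V • 1 :=
      Finset.sum_le_card_nsmul _ _ 1 (fun v _ => by have := hno v; omega)
    have hcard := hT.card_edgeFinset
    simp only [smul_eq_mul, mul_one, Finset.card_univ] at hle
    omega
  obtain ⟨c, hc⟩ := hdeg
  rw [← SimpleGraph.card_neighborFinset_eq_degree] at hc
  obtain ⟨u, hu, w, hw, hne⟩ := Finset.one_lt_card.mp (show 1 < (G.neighborFinset c).card by omega)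
  rw [SimpleGraph.mem_neighborFinset] at hu hw
  have hnadj : ¬ G.Adj u w := by
    intro hadj
    have hb := (SimpleGraph.isAcyclic_iff_forall_adj_isBridge.mp hT.2) hadj
    rw [SimpleGraph.isBridge_iff] at hb
    apply hb
    have h1 : (G \ SimpleGraph.fromEdgeSet {s(u, w)}).Adj u c := by
      rw [SimpleGraph.sdiff_adj]
      refine ⟨hu.symm, ?_⟩
      rw [SimpleGraph.fromEdgeSet_adj]
      rintro ⟨hmem, -⟩
      rw [Set.mem_singleton_iff] at hmem
      rcases Sym2.eq_iff.mp hmem with ⟨_, h⟩ | ⟨h, _⟩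
      · exact hw.ne h
      · exact hne h
    have h2 : (G \ SimpleGraph.fromEdgeSet {s(u, w)}).Adj c w := by
      rw [SimpleGraph.sdiff_adj]
      refine ⟨hw, ?_⟩
      rw [SimpleGraph.fromEdgeSet_adj]
      rintro ⟨hmem, -⟩
      rw [Set.mem_singleton_iff] at hmem
      rcases Sym2.eq_iff.mp hmem with ⟨h, _⟩ | ⟨h, _⟩
      · exact hu.ne h
      · exact hw.ne h
    exact h1.reachable.trans h2.reachable
  set lam : ℂ := (2 : ℂ) ^ (((r : ℕ) : ℂ))⁻¹ with hlamdef
  have hl2 : lam ^ r = 2 := Complex.cpow_nat_inv_pow _ hrne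
  have hl0 : lam ≠ 0 := by
    intro h
    rw [h, zero_pow hrne] at hl2
    exact two_ne_zero hl2.symm
  refine ⟨lam, hl0, positive_part G r hr c u w hu hw hne hnadj hl2 hl0, ?_⟩
  rintro ⟨x, hx⟩
  have hinv0 : (1 : ℂ) / lam ≠ 0 := by
    rw [one_div]
    exact inv_ne_zero hl0
  obtain ⟨μ, hint, hμ2⟩ := stepB G r hr hinv0 hx
  have hμval : μ ^ 2 = (2 : ℂ)⁻¹ := by
    rw [hμ2, one_div, inv_pow, hl2]
  apply half_not_integral
  rw [← hμval, sq]
  exact hint.mul hint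
end
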